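/- arXiv:2204.08118 — 14 statements merged into one kernel-verified Lean document; each statement's English description precedes it below -/
import Mathlib

section
/- Let p be an odd prime, n and t positive integers, and s = gcd(n, t). If n/s is even, then the linearized polynomial x^{p^t} + x has exactly p^s roots in the finite field F_{p^n}. -/
open Finset Polynomial

/-- `e ∣ p^c - 1` iff `p^c = 1` in `ZMod e`. -/
lemma aux_dvd_iff (e p c : ℕ) [NeZero e] (hp : 0 < p) :
    e ∣ p ^ c - 1 ↔ (p : ZMod e) ^ c = 1 := by
  rw [← ZMod.natCast_eq_zero_iff, Nat.cast_sub (Nat.one_le_pow _ _ hp),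
    Nat.cast_pow, Nat.cast_one, sub_eq_zero]

/-- If `e` divides `p^a - 1` and `p^b - 1` then it divides `p^gcd(a,b) - 1`. -/
lemma aux_dvd_gcd {e p a b : ℕ} (hp : 0 < p) (he : e ≠ 0)
    (ha : e ∣ p ^ a - 1) (hb : e ∣ p ^ b - 1) : e ∣ p ^ Nat.gcd a b - 1 := by
  haveI : NeZero e := ⟨he⟩
  rw [aux_dvd_iff e p _ hp] at ha hb ⊢
  exact pow_gcd_eq_one.mpr ⟨ha, hb⟩

/-- In a finite field, the number of solutions of `x^j = 1` is `gcd(j, q-1)`. -/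
lemma aux_card_pow_eq_one (F : Type*) [Field F] [Fintype F] [DecidableEq F]
    {j : ℕ} (hj : 0 < j) :
    (Finset.univ.filter fun x : F => x ^ j = 1).card = Nat.gcd j (Fintype.card F - 1) := by
  classical
  set N := Fintype.card F - 1 with hN
  have hN0 : 0 < N := by
    have := Fintype.one_lt_card (α := F)
    omega
  set d := Nat.gcd j N with hd
  have hd0 : 0 < d := Nat.gcd_pos_of_pos_left _ hj
  haveI : NeZero d := ⟨hd0.ne'⟩
  have hdN : d ∣ N := Nat.gcd_dvd_right _ _
  have hset : (Finset.univ.filter fun x : F => x ^ j = 1) = Polynomial.nthRootsFinset d (1 : F) := by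
    ext x
    simp only [Finset.mem_filter, Finset.mem_univ, true_and,
      Polynomial.mem_nthRootsFinset hd0 (1 : F)]
    constructor
    · intro hx
      have hx0 : x ≠ 0 := by
        rintro rfl
        rw [zero_pow hj.ne'] at hx
        exact zero_ne_one hx
      have hxN : x ^ N = 1 := by
        simpa [hN] using FiniteField.pow_card_sub_one_eq_one x hx0
      exact pow_gcd_eq_one.mpr ⟨hx, hxN⟩
    · intro hx
      obtain ⟨c, hc⟩ := Nat.gcd_dvd_left j N
      rw [hc, pow_mul, hx, one_pow]
  rw [hset]
  obtain ⟨g, hg⟩ := IsCyclic.exists_generator (α := Fˣ)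
  have hog : orderOf g = N := by
    rw [orderOf_eq_card_of_forall_mem_zpowers hg, Nat.card_eq_fintype_card, Fintype.card_units]
  have hoζ : orderOf (g ^ (N / d)) = d := by
    rw [orderOf_pow, hog, Nat.gcd_eq_right (Nat.div_dvd_of_dvd hdN),
      Nat.div_div_self hdN hN0.ne']
  have hprimu : IsPrimitiveRoot (g ^ (N / d)) d := by
    have h := IsPrimitiveRoot.orderOf (g ^ (N / d))
    rwa [hoζ] at h
  have hprim : IsPrimitiveRoot ((g ^ (N / d) : Fˣ) : F) d :=
    IsPrimitiveRoot.coe_units_iff.mpr hprimu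
  exact hprim.card_nthRootsFinset

/-- Let `p` be an odd prime, `n, t` positive integers, `s = gcd(n, t)`. If `n / s` is even,
then `x^(p^t) + x` has exactly `p^s` roots in the finite field with `p^n` elements. -/
theorem stmt1 (p : ℕ) (hp : p.Prime) (hpodd : Odd p) (n t : ℕ) (hn : 0 < n) (ht : 0 < t)
    (s : ℕ) (hs : s = Nat.gcd n t) (heven : Even (n / s))
    (F : Type*) [Field F] [Fintype F] [DecidableEq F]
    (hF : Fintype.card F = p ^ n) :
    (Finset.univ.filter (fun x : F => x ^ (p ^ t) + x = 0)).card = p ^ s := by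
  classical
  have hp1 : 1 < p := hp.one_lt
  have hsn : s ∣ n := hs ▸ Nat.gcd_dvd_left n t
  have hst : s ∣ t := hs ▸ Nat.gcd_dvd_right n t
  have hs0 : 0 < s := hs ▸ Nat.gcd_pos_of_pos_left _ hn
  set N := p ^ n - 1 with hNdef
  set k := p ^ t - 1 with hkdef
  set d := p ^ s - 1 with hddef
  have hps : 1 < p ^ s := Nat.one_lt_pow hs0.ne' hp1
  have hpt : 1 < p ^ t := Nat.one_lt_pow ht.ne' hp1
  have hpn : 1 < p ^ n := Nat.one_lt_pow hn.ne' hp1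
  have hk0 : 0 < k := by omega
  have hd0 : 0 < d := by omega
  have hN0 : 0 < N := by omega
  -- divisibilities
  have hdvd : ∀ a : ℕ, s ∣ a → d ∣ p ^ a - 1 := by
    rintro a ⟨c, rfl⟩
    rw [pow_mul]
    simpa using Nat.sub_dvd_pow_sub_pow (p ^ s) 1 c
  have hdk : d ∣ k := hdvd t hst
  have hdN : d ∣ N := hdvd n hsn
  -- 2*d divides N since n/s is even
  have h2dN : 2 * d ∣ N := by
    obtain ⟨c, hc⟩ := heven
    have hnsm : n = s * (c + c) := by rw [← hc]; exact (Nat.mul_div_cancel' hsn).symm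
    have h1 : p ^ n = ((p ^ s) ^ 2) ^ c := by
      rw [← pow_mul, ← pow_mul, hnsm]; ring_nf
    have h2 : (p ^ s) ^ 2 - 1 ∣ N := by
      rw [hNdef, h1]
      simpa using Nat.sub_dvd_pow_sub_pow ((p ^ s) ^ 2) 1 c
    have h3 : (p ^ s) ^ 2 - 1 = (p ^ s + 1) * d := by
      show (p ^ s) ^ 2 - 1 = (p ^ s + 1) * (p ^ s - 1)
      have h4 : 1 ≤ p ^ s := hps.le
      have h5 : 1 ≤ (p ^ s) ^ 2 := one_le_pow₀ h4
      zify [h4, h5]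
      ring
    have h6 : Even (p ^ s + 1) := (hpodd.pow).add_one
    obtain ⟨w, hw⟩ := h6
    refine dvd_trans ?_ h2
    rw [h3, hw]
    exact ⟨w, by ring⟩
  -- gcd computations
  have hgk : Nat.gcd k N = d := by
    apply Nat.dvd_antisymm
    · have := aux_dvd_gcd (p := p) (a := t) (b := n) (by omega)
        (Nat.gcd_pos_of_pos_left _ hk0).ne' (Nat.gcd_dvd_left k N) (Nat.gcd_dvd_right k N)
      rwa [Nat.gcd_comm t n, ← hs] at this
    · exact Nat.dvd_gcd hdk hdN
  have hg2k : Nat.gcd (2 * k) N = 2 * d := by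
    apply Nat.dvd_antisymm
    · have h1 : Nat.gcd (2 * k) N ∣ Nat.gcd (2 * k) (2 * N) :=
        Nat.dvd_gcd (Nat.gcd_dvd_left _ _) ((Nat.gcd_dvd_right _ _).trans (dvd_mul_left N 2))
      rwa [Nat.gcd_mul_left, hgk] at h1
    · exact Nat.dvd_gcd (mul_dvd_mul_left 2 hdk) h2dN
  -- characteristic facts
  have hchar : ringChar F = p := by
    haveI := ringChar.charP F
    obtain ⟨m, hrp, hm⟩ := FiniteField.card F (ringChar F)
    rw [hF] at hm
    have : ringChar F ∣ p := by
      have h1 : ringChar F ∣ p ^ n := hm ▸ dvd_pow_self _ m.pos.ne'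
      exact hrp.dvd_of_dvd_pow h1
    exact ((Nat.prime_dvd_prime_iff_eq hrp hp).mp this)
  have hp2 : p ≠ 2 := by
    intro h; rw [h] at hpodd; exact (Nat.not_odd_iff_even.mpr (even_two)) hpodd
  have hneg1 : (-1 : F) ≠ 1 := by
    apply Ring.neg_one_ne_one_of_char_ne_two
    rw [hchar]; exact hp2
  have hneg0 : (-1 : F) ≠ 0 := by
    simp
  -- Step A : the solution set
  have hA : (Finset.univ.filter (fun x : F => x ^ (p ^ t) + x = 0)) =
      insert (0 : F) (Finset.univ.filter fun x : F => x ^ k = -1) := by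
    ext x
    simp only [Finset.mem_filter, Finset.mem_univ, true_and, Finset.mem_insert]
    have hpt1 : p ^ t = k + 1 := by omega
    constructor
    · intro hx
      rcases eq_or_ne x 0 with h0 | h0
      · exact Or.inl h0
      · right
        rw [hpt1, pow_succ] at hx
        have : x * (x ^ k + 1) = 0 := by linear_combination hx
        rcases mul_eq_zero.mp this with h | h
        · exact absurd h h0
        · linear_combination h
    · rintro (rfl | hx)
      · simp [zero_pow (show p ^ t ≠ 0 by positivity)]
      · rw [hpt1, pow_succ, hx]; ring
  -- Step B : count x^k = -1
  have hB : (Finset.univ.filter fun x : F => x ^ k = -1) =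
      (Finset.univ.filter fun x : F => x ^ (2 * k) = 1) \
        (Finset.univ.filter fun x : F => x ^ k = 1) := by
    ext x
    simp only [Finset.mem_sdiff, Finset.mem_filter, Finset.mem_univ, true_and]
    constructor
    · intro hx
      refine ⟨?_, ?_⟩
      · rw [mul_comm, pow_mul, hx]; ring
      · rw [hx]; exact hneg1
    · rintro ⟨h1, h2⟩
      rw [mul_comm, pow_mul] at h1
      have : (x ^ k - 1) * (x ^ k + 1) = 0 := by linear_combination h1
      rcases mul_eq_zero.mp this with h | h
      · exact absurd (by linear_combination h : x ^ k = 1) h2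
      · linear_combination h
  have hsub : (Finset.univ.filter fun x : F => x ^ k = 1) ⊆
      (Finset.univ.filter fun x : F => x ^ (2 * k) = 1) := by
    intro x hx
    simp only [Finset.mem_filter, Finset.mem_univ, true_and] at hx ⊢
    rw [mul_comm, pow_mul, hx]; ring
  have hcard1 : (Finset.univ.filter fun x : F => x ^ k = 1).card = d := by
    rw [aux_card_pow_eq_one F hk0, hF]; exact hgk
  have hcard2 : (Finset.univ.filter fun x : F => x ^ (2 * k) = 1).card = 2 * d := by
    rw [aux_card_pow_eq_one F (by omega), hF]; exact hg2k
  have h0notin : (0 : F) ∉ (Finset.univ.filter fun x : F => x ^ k = -1) := by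
    simp only [Finset.mem_filter, Finset.mem_univ, true_and]
    rw [zero_pow hk0.ne']
    exact fun h => hneg0 h.symm
  rw [hA, Finset.card_insert_of_notMem h0notin, hB, Finset.card_sdiff_of_subset hsub, hcard1, hcard2]
  omega
end

section
/- Let p be an odd prime, n and t positive integers, and s = gcd(n, t). If n/s is odd, then the only root of the linearized polynomial x^{p^t} + x in the finite field F_{p^n} is x = 0 (i.e., it has exactly one root). -/
/-!
If `x ^ q = -x` with `q = p ^ t` odd, iterating gives `x ^ (q ^ k) = (-1) ^ k * x`. For
`k = n / gcd n t` we have `q ^ k = (p ^ n) ^ (t / gcd n t)`, a power of `|F|`, which fixes `x`;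
as `k` is odd this forces `x = -x`, and `2 ≠ 0` in `F` because `|F| = p ^ n` is odd.
-/

theorem pow_pow_eq_neg_one_pow_mul {R : Type*} [CommRing R] {q : ℕ} (hq : Odd q) {x : R}
    (hx : x ^ q = -x) (k : ℕ) : x ^ q ^ k = (-1) ^ k * x := by
  induction k with
  | zero => simp
  | succ k ih =>
    rw [pow_succ, pow_mul, ih, mul_pow, hx, ← pow_mul, mul_comm k, pow_mul, hq.neg_one_pow]
    ring

theorem eq_zero_of_pow_eq_neg_of_pow_pow_eq_self {R : Type*} [CommRing R] [NoZeroDivisors R]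
    (h2 : (2 : R) ≠ 0) {q k : ℕ} (hq : Odd q) (hk : Odd k) {x : R} (hx : x ^ q = -x)
    (hfix : x ^ q ^ k = x) : x = 0 := by
  have hneg : x = -x :=
    calc x = x ^ q ^ k := hfix.symm
      _ = -x := by rw [pow_pow_eq_neg_one_pow_mul hq hx, hk.neg_one_pow, neg_one_mul]
  have h2x : 2 * x = 0 := by linear_combination hneg
  exact (mul_eq_zero.mp h2x).resolve_left h2

theorem FiniteField.two_ne_zero_of_odd_card {F : Type*} [Field F] [Fintype F]
    (hF : Odd (Fintype.card F)) : (2 : F) ≠ 0 :=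
  Ring.two_ne_zero fun h => by
    simpa [Nat.odd_iff.mp hF] using FiniteField.even_card_iff_char_two.mp h

theorem Nat.pow_pow_div_gcd (p n t : ℕ) :
    (p ^ t) ^ (n / n.gcd t) = (p ^ n) ^ (t / n.gcd t) := by
  rw [← pow_mul, ← pow_mul, mul_comm, Nat.div_mul_right_comm (n.gcd_dvd_left t),
    Nat.mul_div_assoc n (n.gcd_dvd_right t)]

theorem stmt2_general (p : ℕ) (hpodd : Odd p) (n t : ℕ)
    (s : ℕ) (hs : s = Nat.gcd n t) (hodd : Odd (n / s))
    (F : Type*) [Field F] [Fintype F] [DecidableEq F]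
    (hF : Fintype.card F = p ^ n) :
    (∀ x : F, x ^ (p ^ t) + x = 0 ↔ x = 0) ∧
    (Finset.univ.filter (fun x : F => x ^ (p ^ t) + x = 0)).card = 1 := by
  subst hs
  have h2 : (2 : F) ≠ 0 := FiniteField.two_ne_zero_of_odd_card (hF ▸ hpodd.pow)
  have roots : ∀ x : F, x ^ (p ^ t) + x = 0 ↔ x = 0 := by
    intro x
    refine ⟨fun hx => ?_, fun hx => by simp [hx, hpodd.pos.ne']⟩
    refine eq_zero_of_pow_eq_neg_of_pow_pow_eq_self h2 hpodd.pow hodd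
      (eq_neg_of_add_eq_zero_left hx) ?_
    rw [Nat.pow_pow_div_gcd, ← hF, FiniteField.pow_card_pow]
  refine ⟨roots, Finset.card_eq_one.mpr ⟨0, ?_⟩⟩
  ext x
  simp [roots]

/-- Let `p` be an odd prime, `n, t` positive integers, `s = gcd(n, t)`. If `n / s` is odd,
then the only root of `x^(p^t) + x` in the finite field with `p^n` elements is `x = 0`,
i.e. it has exactly one root. -/
theorem stmt2 (p : ℕ) (hp : p.Prime) (hpodd : Odd p) (n t : ℕ) (hn : 0 < n) (ht : 0 < t)
    (s : ℕ) (hs : s = Nat.gcd n t) (hodd : Odd (n / s))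
    (F : Type*) [Field F] [Fintype F] [DecidableEq F]
    (hF : Fintype.card F = p ^ n) :
    (∀ x : F, x ^ (p ^ t) + x = 0 ↔ x = 0) ∧
    (Finset.univ.filter (fun x : F => x ^ (p ^ t) + x = 0)).card = 1 :=
  stmt2_general p hpodd n t s hs hodd F hF
end

section
/- Let m be an even positive integer and n = 2m. For the power mapping F(x) = x^{2^m+2} over F_{2^n}, the differential spectrum is given by ω_0 = 2^{n-1}, ω_1 = 0, ω_2 = 2^{n-1}, and ω_i = 0 for all i > 2; in particular δ(b) ∈ {0, 2} for every b ∈ F_{2^n}. -/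
/-!
In characteristic 2, `(x + 1)^(2^m+2) - x^(2^m+2) = L x + 1` with `L x = x^(2^m) + x^2` additive,
so every nonempty fibre of the derivative is a coset of `ker L`. If `z^(2^m) = z^2`, raising to the
power `2^m` and using `z^(2^(2m)) = z` gives `z^4 = z`; as `m` is even this forces `z^(2^m) = z`,
hence `z^2 = z` and `ker L = {0, 1}`. Thus every `b` has `δ(b) ∈ {0, 2}`, and since the `δ(b)` add
up to `2^n`, exactly half of the `b` have `δ(b) = 2`.
-/

/-- The number of `x` in the field `F` with `(x+1)^d - x^d = b`. -/
def deltaF (F : Type*) [Field F] [Fintype F] [DecidableEq F] (d : ℕ) (b : F) : ℕ :=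
  (Finset.univ.filter (fun x : F => (x + 1) ^ d - x ^ d = b)).card

/-- The number of `b` in the field `F` with `deltaF F d b = i`. -/
def omegaF (F : Type*) [Field F] [Fintype F] [DecidableEq F] (d i : ℕ) : ℕ :=
  (Finset.univ.filter (fun b : F => deltaF F d b = i)).card

section DifferentialSpectrum

variable {F : Type*} [Field F] [Fintype F] [DecidableEq F] {d : ℕ}

theorem sum_deltaF (d : ℕ) : ∑ b : F, deltaF F d b = Fintype.card F :=
  (Finset.card_eq_sum_card_fiberwise fun _ _ => Finset.mem_univ _).symm

theorem two_mul_omegaF_two_of_deltaF_eq_zero_or_two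
    (hδ : ∀ b : F, deltaF F d b = 0 ∨ deltaF F d b = 2) : 2 * omegaF F d 2 = Fintype.card F := by
  have hite : ∀ b : F, deltaF F d b = 2 * if deltaF F d b = 2 then 1 else 0 := fun b => by
    rcases hδ b with h | h <;> simp [h]
  rw [← sum_deltaF d, Finset.sum_congr rfl fun b _ => hite b, ← Finset.mul_sum,
    Finset.sum_boole]
  rfl

theorem omegaF_zero_add_omegaF_two_of_deltaF_eq_zero_or_two
    (hδ : ∀ b : F, deltaF F d b = 0 ∨ deltaF F d b = 2) :
    omegaF F d 0 + omegaF F d 2 = Fintype.card F := by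
  have hne : Finset.univ.filter (fun b : F => ¬deltaF F d b = 0) =
      Finset.univ.filter (fun b : F => deltaF F d b = 2) :=
    Finset.filter_congr fun b _ => by rcases hδ b with h | h <;> simp [h]
  rw [omegaF, omegaF, ← hne, Finset.card_filter_add_card_filter_not, Finset.card_univ]

theorem omegaF_eq_zero_of_deltaF_eq_zero_or_two
    (hδ : ∀ b : F, deltaF F d b = 0 ∨ deltaF F d b = 2) {i : ℕ} (h0 : i ≠ 0) (h2 : i ≠ 2) :
    omegaF F d i = 0 :=
  Finset.card_eq_zero.mpr <| Finset.filter_eq_empty_iff.mpr fun b _ => by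
    rcases hδ b with h | h <;> omega

end DifferentialSpectrum

theorem pow_four_eq_self_of_pow_two_pow_eq_sq {M : Type*} [Monoid M] {z : M} {m : ℕ}
    (hz : z ^ 2 ^ m = z ^ 2) (hfix : z ^ 2 ^ (2 * m) = z) : z ^ 4 = z :=
  calc z ^ 4 = (z ^ 2 ^ m) ^ 2 := by rw [hz, ← pow_mul]
    _ = (z ^ 2) ^ 2 ^ m := by rw [← pow_mul, ← pow_mul, mul_comm]
    _ = z ^ 2 ^ (2 * m) := by rw [← hz, ← pow_mul, ← pow_add, two_mul]
    _ = z := hfix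

theorem pow_two_pow_eq_self_of_pow_four_eq_self {M : Type*} [Monoid M] {z : M} (h : z ^ 4 = z)
    {m : ℕ} (hm : Even m) : z ^ 2 ^ m = z := by
  obtain ⟨k, rfl⟩ := hm
  rw [show 2 ^ (k + k) = 4 ^ k by rw [← two_mul, pow_mul]; norm_num]
  induction k with
  | zero => simp
  | succ k ih => rw [pow_succ, pow_mul, ih, h]

theorem eq_zero_or_eq_one_of_pow_two_pow_eq_sq {F : Type*} [Field F] [Fintype F] {m : ℕ}
    (hm : Even m) (hF : Fintype.card F = 2 ^ (2 * m)) {z : F} (hz : z ^ 2 ^ m = z ^ 2) :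
    z = 0 ∨ z = 1 := by
  have hfix : z ^ 2 ^ (2 * m) = z := hF ▸ FiniteField.pow_card z
  have hself := pow_two_pow_eq_self_of_pow_four_eq_self
    (pow_four_eq_self_of_pow_two_pow_eq_sq hz hfix) hm
  exact eq_zero_or_one_of_sq_eq_self (hz ▸ hself)

theorem add_one_pow_sub_pow_two_pow_add_two {R : Type*} [CommRing R] [CharP R 2] (m : ℕ)
    (x : R) : (x + 1) ^ (2 ^ m + 2) - x ^ (2 ^ m + 2) = x ^ 2 ^ m + x ^ 2 + 1 := by
  have h2 : (2 : R) = 0 := CharTwo.two_eq_zero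
  rw [pow_add, pow_add, add_pow_char_pow]
  linear_combination (x ^ 2 ^ m * x + x) * h2

section Fibres

variable {F : Type*} [Field F] [Fintype F] [CharP F 2] {m : ℕ}

theorem add_one_pow_sub_pow_two_pow_add_two_eq_iff (hm : Even m)
    (hF : Fintype.card F = 2 ^ (2 * m)) (x y : F) :
    (y + 1) ^ (2 ^ m + 2) - y ^ (2 ^ m + 2) = (x + 1) ^ (2 ^ m + 2) - x ^ (2 ^ m + 2) ↔
      y = x ∨ y = x + 1 := by
  have h2 : (2 : F) = 0 := CharTwo.two_eq_zero
  rw [add_one_pow_sub_pow_two_pow_add_two, add_one_pow_sub_pow_two_pow_add_two]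
  constructor
  · intro h
    have hker : (y + x) ^ 2 ^ m = (y + x) ^ 2 := by
      rw [add_pow_char_pow]
      linear_combination h + (x ^ 2 ^ m - y ^ 2 - y * x) * h2
    rcases eq_zero_or_eq_one_of_pow_two_pow_eq_sq hm hF hker with h0 | h1
    · left; linear_combination h0 - x * h2
    · right; linear_combination h1 - x * h2
  · rintro (rfl | rfl)
    · rfl
    · rw [add_pow_char_pow]
      linear_combination (x + 1) * h2

theorem deltaF_eq_zero_or_two [DecidableEq F] (hm : Even m)
    (hF : Fintype.card F = 2 ^ (2 * m)) (b : F) :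
    deltaF F (2 ^ m + 2) b = 0 ∨ deltaF F (2 ^ m + 2) b = 2 := by
  rcases (Finset.univ.filter
      fun x : F => (x + 1) ^ (2 ^ m + 2) - x ^ (2 ^ m + 2) = b).eq_empty_or_nonempty with
    hempty | ⟨x, hx⟩
  · left
    rw [deltaF, hempty, Finset.card_empty]
  · right
    rw [Finset.mem_filter] at hx
    have hfibre : Finset.univ.filter
        (fun y : F => (y + 1) ^ (2 ^ m + 2) - y ^ (2 ^ m + 2) = b) = {x, x + 1} := by
      ext y
      simp only [Finset.mem_filter, Finset.mem_univ, true_and, Finset.mem_insert,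
        Finset.mem_singleton]
      rw [← hx.2, add_one_pow_sub_pow_two_pow_add_two_eq_iff hm hF]
    rw [deltaF, hfibre, Finset.card_pair (left_ne_add.mpr one_ne_zero)]

end Fibres

/-- Differential spectrum of `x^(2^m+2)` over `F_{2^n}`, `n = 2m`, `m` even. -/
theorem stmt4 (m : ℕ) (hm : 0 < m) (hme : Even m) (n : ℕ) (hn : n = 2 * m)
    (F : Type*) [Field F] [Fintype F] [DecidableEq F]
    (hF : Fintype.card F = 2 ^ n) :
    omegaF F (2 ^ m + 2) 0 = 2 ^ (n - 1) ∧
    omegaF F (2 ^ m + 2) 1 = 0 ∧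
    omegaF F (2 ^ m + 2) 2 = 2 ^ (n - 1) ∧
    (∀ i, 2 < i → omegaF F (2 ^ m + 2) i = 0) ∧
    (∀ b : F, deltaF F (2 ^ m + 2) b ∈ ({0, 2} : Set ℕ)) := by
  subst hn
  have : CharP F 2 := charP_of_card_eq_prime_pow hF
  have hδ := deltaF_eq_zero_or_two hme hF
  have h2 := two_mul_omegaF_two_of_deltaF_eq_zero_or_two hδ
  have h02 := omegaF_zero_add_omegaF_two_of_deltaF_eq_zero_or_two hδ
  have hhalf : 2 ^ (2 * m) = 2 * 2 ^ (2 * m - 1) := by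
    rw [← pow_succ']; congr 1; omega
  rw [hF] at h2 h02
  refine ⟨by omega, omegaF_eq_zero_of_deltaF_eq_zero_or_two hδ one_ne_zero (by decide),
    by omega, fun i hi => omegaF_eq_zero_of_deltaF_eq_zero_or_two hδ (by omega) (by omega),
    fun b => ?_⟩
  rcases hδ b with h | h <;> simp [h]
end

section
/- Let m be a positive integer and n = 2m. For the power mapping F(x) = x^{3^m+2} over F_{3^n}, one has δ(1) = 3^m, and δ(b) ∈ {0, 2} for every b ∈ F_{3^n} with b ≠ 1. -/
lemma card_root_le (F : Type*) [Field F] [Fintype F] [DecidableEq F]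
    (p : Polynomial F) (hp : p ≠ 0) :
    (Finset.univ.filter fun x : F => p.eval x = 0).card ≤ p.natDegree := by
  calc (Finset.univ.filter fun x : F => p.eval x = 0).card
      ≤ p.roots.toFinset.card := by
        apply Finset.card_le_card
        intro x hx
        simp only [Finset.mem_filter] at hx
        simp [Polynomial.mem_roots, hp, hx.2]
    _ ≤ Multiset.card p.roots := Multiset.toFinset_card_le _
    _ ≤ p.natDegree := Polynomial.card_roots' p

/-- For `x^(3^m+2)` over `F_{3^n}` with `n = 2m`: `δ(1) = 3^m` and `δ(b) ∈ {0, 2}`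
for every `b ≠ 1`. -/
theorem stmt6 (m : ℕ) (hm : 0 < m) (n : ℕ) (hn : n = 2 * m)
    (F : Type*) [Field F] [Fintype F] [DecidableEq F]
    (hF : Fintype.card F = 3 ^ n) :
    deltaF F (3 ^ m + 2) 1 = 3 ^ m ∧
    (∀ b : F, b ≠ 1 → deltaF F (3 ^ m + 2) b ∈ ({0, 2} : Set ℕ)) := by
  haveI hfact : Fact (Nat.Prime 3) := ⟨by norm_num⟩
  haveI hchar : CharP F 3 := by
    have hp : (ringChar F).Prime := CharP.char_is_prime F _
    obtain ⟨k, hk1, hk2⟩ := FiniteField.card F (ringChar F)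
    have h3 : ringChar F = 3 := by
      have hd : ringChar F ∣ 3 ^ n := by
        rw [← hF, hk2]; exact dvd_pow_self _ (by exact_mod_cast k.ne_zero)
      have := hp.dvd_of_dvd_pow hd
      exact (Nat.prime_dvd_prime_iff_eq hp (by norm_num)).mp this
    rw [← h3]; exact ringChar.charP F
  have h3 : (3 : F) = 0 := by exact_mod_cast CharP.cast_eq_zero F 3
  set q := 3 ^ m with hq
  have hq1 : 1 < q := by
    calc 1 < 3 ^ 1 := by norm_num
    _ ≤ 3 ^ m := Nat.pow_le_pow_right (by norm_num) hm
  have hadd : ∀ x y : F, (x + y) ^ q = x ^ q + y ^ q := fun x y => add_pow_char_pow x y 3 m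
  have hsub : ∀ x y : F, (x - y) ^ q = x ^ q - y ^ q := by
    intro x y
    have := hadd (x - y) y
    rw [sub_add_cancel] at this
    exact eq_sub_of_add_eq this.symm
  have hqq : ∀ x : F, (x ^ q) ^ q = x := by
    intro x
    rw [← pow_mul, hq, ← pow_add, ← two_mul, ← hn, ← hF, FiniteField.pow_card]
  -- key identity
  have key : ∀ x : F, (x + 1) ^ (q + 2) - x ^ (q + 2) = (x ^ q - x) * (1 - x) + 1 := by
    intro x
    have h1 : (x + 1) ^ q = x ^ q + 1 := by simpa using hadd x 1
    rw [pow_add, pow_add, h1]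
    linear_combination (x ^ q * x + x) * h3
  constructor
  · -- δ(1) = q
    show (Finset.univ.filter fun x : F => (x + 1) ^ (q + 2) - x ^ (q + 2) = 1).card = q
    have hset1 : (Finset.univ.filter fun x : F => (x + 1) ^ (q + 2) - x ^ (q + 2) = 1)
        = Finset.univ.filter fun x : F => x ^ q - x = 0 := by
      ext x
      simp only [Finset.mem_filter, Finset.mem_univ, true_and, key]
      constructor
      · intro h
        have h2 : (x ^ q - x) * (1 - x) = 0 := by linear_combination h
        rcases mul_eq_zero.mp h2 with h' | h'
        · exact h'
        · have hx1 : x = 1 := by linear_combination -h'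
          simp [hx1]
      · intro h; rw [h]; ring
    rw [hset1]
    set A := Finset.univ.filter fun x : F => x ^ q - x = 0 with hA
    set B := Finset.univ.filter fun x : F => x ^ q + x = 0 with hB
    -- A.card ≤ q
    have hdegA : (Polynomial.X ^ q - Polynomial.X : Polynomial F).natDegree = q := by
      rw [Polynomial.natDegree_sub_eq_left_of_natDegree_lt, Polynomial.natDegree_X_pow]
      rw [Polynomial.natDegree_X_pow, Polynomial.natDegree_X]; omega
    have hA0 : (Polynomial.X ^ q - Polynomial.X : Polynomial F) ≠ 0 := by
      intro h; rw [h] at hdegA; simp at hdegA; omega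
    have hAle : A.card ≤ q := by
      have heq : A = Finset.univ.filter
          fun x : F => (Polynomial.X ^ q - Polynomial.X : Polynomial F).eval x = 0 := by
        ext x; simp [hA]
      rw [heq]
      exact le_of_le_of_eq (card_root_le F _ hA0) hdegA
    have hdegB : (Polynomial.X ^ q + Polynomial.X : Polynomial F).natDegree = q := by
      rw [Polynomial.natDegree_add_eq_left_of_natDegree_lt, Polynomial.natDegree_X_pow]
      rw [Polynomial.natDegree_X_pow, Polynomial.natDegree_X]; omega
    have hB0 : (Polynomial.X ^ q + Polynomial.X : Polynomial F) ≠ 0 := by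
      intro h; rw [h] at hdegB; simp at hdegB; omega
    have hBle : B.card ≤ q := by
      have heq : B = Finset.univ.filter
          fun x : F => (Polynomial.X ^ q + Polynomial.X : Polynomial F).eval x = 0 := by
        ext x; simp [hB]
      rw [heq]
      exact le_of_le_of_eq (card_root_le F _ hB0) hdegB
    -- lower bound
    set g : F → F := fun x => x ^ q - x with hg
    have himg : (Finset.univ.image g) ⊆ B := by
      intro a ha
      obtain ⟨x, -, rfl⟩ := Finset.mem_image.mp ha
      simp only [hB, Finset.mem_filter, Finset.mem_univ, true_and, hg]
      rw [hsub, hqq]; ring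
    have hfiber : ∀ a ∈ Finset.univ.image g,
        (Finset.univ.filter fun x : F => g x = a).card ≤ A.card := by
      intro a ha
      obtain ⟨x0, -, hx0⟩ := Finset.mem_image.mp ha
      apply Finset.card_le_card_of_injOn (fun x => x - x0)
      · intro x hx
        simp only [Finset.mem_coe, Finset.mem_filter, Finset.mem_univ, true_and] at hx ⊢
        simp only [hA, Finset.mem_filter, Finset.mem_univ, true_and]
        rw [hsub]
        simp only [hg] at hx hx0
        linear_combination hx - hx0
      · intro x _ y _ h
        simpa using h
    have hcard : Fintype.card F = q * q := by
      rw [hF, hn, two_mul, pow_add]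
    have hle : q * q ≤ A.card * q := by
      calc q * q = Fintype.card F := hcard.symm
        _ = (Finset.univ : Finset F).card := Finset.card_univ.symm
        _ ≤ A.card * (Finset.univ.image g).card :=
            Finset.card_le_mul_card_image Finset.univ A.card hfiber
        _ ≤ A.card * q := Nat.mul_le_mul_left _ (le_trans (Finset.card_le_card himg) hBle)
    exact le_antisymm hAle (Nat.le_of_mul_le_mul_right hle (by omega))
  · -- b ≠ 1 case
    intro b hb
    set c := b - 1 with hcdef
    have hc : c ≠ 0 := sub_ne_zero.mpr hb
    show (Finset.univ.filter fun x : F => (x + 1) ^ (q + 2) - x ^ (q + 2) = b).card ∈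
      ({0, 2} : Set ℕ)
    set S := Finset.univ.filter fun x : F => (x ^ q - x) * (1 - x) = c with hSdef
    have hSS : (Finset.univ.filter fun x : F => (x + 1) ^ (q + 2) - x ^ (q + 2) = b) = S := by
      ext x
      simp only [hSdef, Finset.mem_filter, Finset.mem_univ, true_and, key, hcdef]
      constructor <;> intro h <;> linear_combination h
    rw [hSS]
    have hmemS : ∀ x : F, x ∈ S ↔ (x ^ q - x) * (1 - x) = c := by
      intro x; simp [hSdef]
    rcases S.eq_empty_or_nonempty with hE | ⟨x0, hx0⟩
    · left; rw [hE]; simp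
    · right
      have hx0' := (hmemS x0).mp hx0
      -- square identity
      have hsq : ∀ x : F, (x ^ q - x) * (1 - x) = c → (x ^ q - x) ^ 2 = c + c ^ q := by
        intro x hx
        have e1 : c ^ q = ((x ^ q - x) * (1 - x)) ^ q := by rw [hx]
        rw [mul_pow, hsub (x ^ q) x, hqq x, hsub 1 x, one_pow] at e1
        linear_combination hx - e1
      -- uniqueness
      have huniq : ∀ y ∈ S, y = x0 ∨ y = -1 - x0 := by
        intro y hyS
        have hy := (hmemS y).mp hyS
        have htx0 : x0 ^ q - x0 ≠ 0 := by
          intro h; apply hc; rw [← hx0', h, zero_mul]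
        have e : ((x0 ^ q - x0) - (y ^ q - y)) * ((x0 ^ q - x0) + (y ^ q - y)) = 0 := by
          have h1 := hsq x0 hx0'
          have h2 := hsq y hy
          linear_combination h1 - h2
        rcases mul_eq_zero.mp e with h | h
        · left
          have hty : y ^ q - y = x0 ^ q - x0 := by linear_combination -h
          rw [hty] at hy
          have h5 := mul_left_cancel₀ htx0 (hx0'.trans hy.symm)
          linear_combination h5
        · right
          have hty : y ^ q - y = -(x0 ^ q - x0) := by linear_combination h
          rw [hty] at hy
          have h2 : (x0 ^ q - x0) * ((1 - x0) + (1 - y)) = 0 := by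
            linear_combination hx0' - hy
          have h4 := (mul_eq_zero.mp h2).resolve_left htx0
          linear_combination h3 - h4
      -- -1 - x0 is also a solution
      have hodd : Odd q := Odd.pow ⟨1, by norm_num⟩
      have hneg1 : (-1 : F) ^ q = -1 := hodd.neg_one_pow
      have hmem2 : (-1 - x0) ∈ S := by
        rw [hmemS]
        have e1 : (-1 - x0 : F) ^ q = -1 - x0 ^ q := by
          rw [hsub, hneg1]
        rw [e1]
        linear_combination hx0' + (x0 - x0 ^ q) * h3
      have hx0ne : x0 ≠ -1 - x0 := by
        intro heq
        apply hc
        rw [← hx0']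
        have h1x : (1 : F) - x0 = 0 := by linear_combination heq - x0 * h3
        rw [h1x, mul_zero]
      have hS2 : S = {x0, -1 - x0} := by
        apply Finset.Subset.antisymm
        · intro y hy
          rcases huniq y hy with h | h <;> simp [h]
        · intro y hy
          simp only [Finset.mem_insert, Finset.mem_singleton] at hy
          rcases hy with h | h
          · rwa [h]
          · rw [h]; exact hmem2
      rw [hS2, Finset.card_insert_of_notMem (by simpa using hx0ne), Finset.card_singleton]
      norm_num
end

section
/- Let m be a positive integer and n = 2m. For the power mapping F(x) = x^{3^m+2} over F_{3^n}, the differential spectrum is given by ω_0 = (3^n + 3^m)/2 - 1, ω_2 = (3^n - 3^m)/2, ω_{3^m} = 1, and ω_i = 0 for every other index i ≥ 1 with i ≠ 2 and i ≠ 3^m. -/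
open Finset Polynomial

private lemma card_roots_aux {F : Type*} [Field F] [Fintype F] [DecidableEq F]
    (q : ℕ) (hq : 2 ≤ q) (a : F) :
    (Finset.univ.filter (fun y : F => y ^ q = a * y)).card ≤ q := by
  classical
  set p : Polynomial F := Polynomial.X ^ q - Polynomial.C a * Polynomial.X with hp
  have hdeg : p.natDegree = q := by
    rw [hp]
    rw [Polynomial.natDegree_sub_eq_left_of_natDegree_lt]
    · exact Polynomial.natDegree_X_pow q
    · rw [Polynomial.natDegree_X_pow]
      have := Polynomial.natDegree_C_mul_le a (Polynomial.X : Polynomial F)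
      have := Polynomial.natDegree_X_le (R := F)
      omega
  have hne : p ≠ 0 := by
    intro h
    rw [h] at hdeg
    simp at hdeg
    omega
  have hsub : (Finset.univ.filter (fun y : F => y ^ q = a * y)) ⊆ p.roots.toFinset := by
    intro y hy
    rw [Finset.mem_filter] at hy
    rw [Multiset.mem_toFinset, Polynomial.mem_roots hne]
    simp [Polynomial.IsRoot, hp, sub_eq_zero, hy.2]
  calc (Finset.univ.filter (fun y : F => y ^ q = a * y)).card
      ≤ p.roots.toFinset.card := Finset.card_le_card hsub
    _ ≤ Multiset.card p.roots := Multiset.toFinset_card_le _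
    _ ≤ p.natDegree := Polynomial.card_roots' p
    _ = q := hdeg

private lemma two_to_one_sq {F : Type*} [Field F] [DecidableEq F]
    (s : Finset F) (h0 : (0:F) ∉ s) (hmem : ∀ t ∈ s, -t ∈ s) (h2 : (2:F) ≠ 0) :
    (s.image (fun t => t * t)).card * 2 = s.card := by
  rw [Finset.card_eq_sum_card_image (fun t => t * t) s]
  rw [Finset.sum_congr rfl (g := fun _ => 2), Finset.sum_const, smul_eq_mul, mul_comm]
  intro a ha
  obtain ⟨t, hts, hta⟩ := Finset.mem_image.mp ha
  have ht0 : t ≠ 0 := fun h => h0 (h ▸ hts)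
  have htne : t ≠ -t := by
    intro h
    apply ht0
    have h2t : 2 * t = 0 := by linear_combination h
    exact (mul_eq_zero.mp h2t).resolve_left h2
  have hfil : s.filter (fun u => u * u = a) = {t, -t} := by
    ext u
    simp only [Finset.mem_filter, Finset.mem_insert, Finset.mem_singleton]
    constructor
    · rintro ⟨hus, hua⟩
      have hz : (u - t) * (u + t) = 0 := by linear_combination hua - hta
      rcases mul_eq_zero.mp hz with h | h
      · left; linear_combination h
      · right; linear_combination h
    · rintro (rfl | rfl)
      · exact ⟨hts, hta⟩
      · exact ⟨hmem t hts, by linear_combination hta⟩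
  rw [hfil, Finset.card_insert_of_notMem (by simpa using htne), Finset.card_singleton]

private lemma charP_of_card {F : Type*} [Field F] [Fintype F]
    (n : ℕ) (hF : Fintype.card F = 3 ^ n) : CharP F 3 := by
  haveI : CharP F (ringChar F) := ringChar.charP F
  obtain ⟨k, hp, hcard⟩ := FiniteField.card F (ringChar F)
  have hdvd : ringChar F ∣ 3 ^ n := by
    rw [← hF, hcard]
    exact dvd_pow_self _ k.2.ne'
  have h3 : ringChar F ∣ 3 := hp.dvd_of_dvd_pow hdvd
  have : ringChar F = 3 := by
    rcases (Nat.prime_three).eq_one_or_self_of_dvd _ h3 with h | h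
    · exact absurd h hp.ne_one
    · exact h
  exact this ▸ ringChar.charP F

/-- solution count for `y*(y-y^q) = c` -/
private def Ncount (F : Type*) [Field F] [Fintype F] [DecidableEq F] (q : ℕ) (c : F) : ℕ :=
  (Finset.univ.filter (fun y : F => y * (y - y ^ q) = c)).card

/-- Differential spectrum of `x^(3^m+2)` over `F_{3^n}`, `n = 2m`. -/
theorem stmt7 (m : ℕ) (hm : 0 < m) (n : ℕ) (hn : n = 2 * m)
    (F : Type*) [Field F] [Fintype F] [DecidableEq F]
    (hF : Fintype.card F = 3 ^ n) :
    omegaF F (3 ^ m + 2) 0 = (3 ^ n + 3 ^ m) / 2 - 1 ∧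
    omegaF F (3 ^ m + 2) 2 = (3 ^ n - 3 ^ m) / 2 ∧
    omegaF F (3 ^ m + 2) (3 ^ m) = 1 ∧
    (∀ i, 1 ≤ i → i ≠ 2 → i ≠ 3 ^ m → omegaF F (3 ^ m + 2) i = 0) := by
  classical
  subst hn
  haveI : Fact (Nat.Prime 3) := ⟨Nat.prime_three⟩
  haveI hchar : CharP F 3 := charP_of_card (2 * m) hF
  set q : ℕ := 3 ^ m with hqdef
  have h3 : (3 : F) = 0 := by exact_mod_cast CharP.cast_eq_zero F 3
  have h2ne : (2 : F) ≠ 0 := by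
    intro h
    have : (1 : F) = 0 := by linear_combination h3 - h
    exact one_ne_zero this
  have hq3 : 3 ≤ q := by
    calc 3 = 3 ^ 1 := (pow_one 3).symm
    _ ≤ 3 ^ m := Nat.pow_le_pow_right (by norm_num) hm
  have hq0 : 0 < q := by omega
  have hqodd : Odd q := by rw [hqdef]; exact Odd.pow ⟨1, rfl⟩
  have hcard : Fintype.card F = q * q := by
    rw [hF, hqdef, ← pow_add]
    congr 1
    omega
  have hfrob : ∀ x y : F, (x + y) ^ q = x ^ q + y ^ q := by
    intro x y
    rw [hqdef]
    exact add_pow_char_pow x y 3 m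
  have hneg : ∀ x : F, (-x) ^ q = -(x ^ q) := fun x => Odd.neg_pow hqodd x
  have hsubq : ∀ x y : F, (x - y) ^ q = x ^ q - y ^ q := by
    intro x y
    rw [sub_eq_add_neg, hfrob, hneg, sub_eq_add_neg]
  have hiter : ∀ x : F, (x ^ q) ^ q = x := by
    intro x
    rw [← pow_mul, ← hcard]
    exact FiniteField.pow_card x
  have h2q : (2 : F) ^ q = 2 := by
    have h21 : (2 : F) = -1 := by linear_combination h3
    rw [h21, hneg, one_pow]
  -- Kf and Tf
  set Tf : Finset F := Finset.univ.filter (fun y : F => y ^ q = -y) with hTfdef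
  set Kf : Finset F := Finset.univ.filter (fun y : F => y ^ q = y) with hKfdef
  have hKle : Kf.card ≤ q := by
    have := card_roots_aux q (by omega) (1 : F)
    simpa [one_mul] using this
  have hTle : Tf.card ≤ q := by
    have := card_roots_aux q (by omega) (-1 : F)
    simpa [neg_one_mul] using this
  have hinj : Fintype.card F ≤ Kf.card * Tf.card := by
    rw [← Finset.card_univ, ← Finset.card_product]
    apply Finset.card_le_card_of_injOn (fun y => ((y + y ^ q) * 2, (y - y ^ q) * 2))
    · intro y _
      simp only [Finset.mem_coe]
      rw [Finset.mem_product]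
      constructor
      · rw [hKfdef, Finset.mem_filter]
        refine ⟨Finset.mem_univ _, ?_⟩
        rw [mul_pow, hfrob, hiter, h2q]
        ring
      · rw [hTfdef, Finset.mem_filter]
        refine ⟨Finset.mem_univ _, ?_⟩
        rw [mul_pow, hsubq, hiter, h2q]
        ring
    · intro y _ y' _ h
      have h1 := congrArg Prod.fst h
      have h2' := congrArg Prod.snd h
      simp only at h1 h2'
      linear_combination h1 + h2' - (y - y') * h3
  have hKT : q * q ≤ Kf.card * Tf.card := by rw [← hcard]; exact hinj
  have hKq : Kf.card = q := by
    have h1 : q * q ≤ Kf.card * q := le_trans hKT (Nat.mul_le_mul_left _ hTle)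
    exact le_antisymm hKle (Nat.le_of_mul_le_mul_right h1 hq0)
  have hTq : Tf.card = q := by
    rw [hKq] at hKT
    exact le_antisymm hTle (Nat.le_of_mul_le_mul_left hKT hq0)
  -- decomposition
  have hzero : ∀ u v : F, u ^ q = u → v ^ q = -v → u + v = 0 → u = 0 ∧ v = 0 := by
    intro u v hu hv h
    have huv : u = -v := eq_neg_of_add_eq_zero_left h
    have huv2 : u = v := by rw [← hu, huv, hneg, hv, neg_neg]
    have hv0 : v = 0 := by
      have h2v : 2 * v = 0 := by linear_combination huv - huv2
      exact (mul_eq_zero.mp h2v).resolve_left h2ne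
    exact ⟨by rw [huv2, hv0], hv0⟩
  have hkey : ∀ y c : F, y * (y - y ^ q) = c →
      ∃ a t : F, a ^ q = a ∧ t ^ q = -t ∧ y = a + t ∧ t * t = c + c ^ q ∧ a * t = c - c ^ q := by
    intro y c hy
    have hcq : c ^ q = y ^ q * (y ^ q - y) := by rw [← hy, mul_pow, hsubq, hiter]
    refine ⟨(y + y ^ q) * 2, (y - y ^ q) * 2, ?_, ?_, ?_, ?_, ?_⟩
    · rw [mul_pow, hfrob, hiter, h2q]; ring
    · rw [mul_pow, hsubq, hiter, h2q]; ring
    · linear_combination (-y) * h3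
    · rw [hcq, ← hy]
      linear_combination (y - y ^ q) ^ 2 * h3
    · rw [hcq, ← hy]
      linear_combination (y ^ 2 - (y ^ q) ^ 2) * h3
  -- trichotomy lemmas
  have M1 : Ncount F q 0 = q := by
    rw [Ncount]
    have hfil : (Finset.univ.filter (fun y : F => y * (y - y ^ q) = 0)) = Kf := by
      ext y
      rw [hKfdef]
      simp only [Finset.mem_filter, Finset.mem_univ, true_and]
      constructor
      · intro h
        rcases mul_eq_zero.mp h with h | h
        · rw [h]; exact zero_pow (by omega)
        · linear_combination -h
      · intro h
        rw [h]; ring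
    rw [hfil, hKq]
  have M2 : ∀ (c t₀ : F), t₀ ^ q = -t₀ → t₀ ≠ 0 → t₀ * t₀ = c + c ^ q → Ncount F q c = 2 := by
    intro c t₀ ht ht0 hta
    have hbq : (c - c ^ q) ^ q = -(c - c ^ q) := by rw [hsubq, hiter]; ring
    set a₀ : F := (c - c ^ q) * t₀⁻¹ with ha₀
    have ha₀q : a₀ ^ q = a₀ := by
      rw [ha₀, mul_pow, hbq, inv_pow, ht, inv_neg]
      ring
    have ha₀t : a₀ * t₀ = c - c ^ q := by
      rw [ha₀]
      field_simp
    have hy₁q : (a₀ + t₀) ^ q = a₀ - t₀ := by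
      rw [hfrob, ha₀q, ht]; ring
    have hy₁sol : (a₀ + t₀) * ((a₀ + t₀) - (a₀ + t₀) ^ q) = c := by
      rw [hy₁q]
      linear_combination 2 * ha₀t + 2 * hta + c * h3
    have hy₁ne : a₀ + t₀ ≠ -(a₀ + t₀) := by
      intro h
      have hy0 : a₀ + t₀ = 0 := by
        have h2y : 2 * (a₀ + t₀) = 0 := by linear_combination h
        exact (mul_eq_zero.mp h2y).resolve_left h2ne
      exact ht0 (hzero a₀ t₀ ha₀q ht hy0).2
    have hfil : (Finset.univ.filter (fun y : F => y * (y - y ^ q) = c)) = {a₀ + t₀, -(a₀ + t₀)} := by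
      ext y
      simp only [Finset.mem_filter, Finset.mem_univ, true_and, Finset.mem_insert,
        Finset.mem_singleton]
      constructor
      · intro hy
        obtain ⟨a, t, haq, htq, hyat, htt, hat⟩ := hkey y c hy
        have h2t : (t - t₀) * (t + t₀) = 0 := by linear_combination htt - hta
        rcases mul_eq_zero.mp h2t with h | h
        · left
          have hteq : t = t₀ := by linear_combination h
          have haeq : a = a₀ := by
            rw [ha₀, ← hat, hteq]
            field_simp
          rw [hyat, hteq, haeq]
        · right
          have hteq : t = -t₀ := by linear_combination h
          have haeq : a = -a₀ := by
            have hax : a * t₀ = -(c - c ^ q) := by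
              rw [hteq] at hat
              linear_combination -hat
            rw [ha₀]
            field_simp
            linear_combination hax
          rw [hyat, hteq, haeq]
          ring
      · rintro (rfl | rfl)
        · exact hy₁sol
        · rw [hneg]
          linear_combination hy₁sol
    rw [Ncount, hfil, Finset.card_insert_of_notMem (by simpa using hy₁ne),
      Finset.card_singleton]
  have M3 : ∀ c : F, c ≠ 0 → (¬ ∃ t : F, t ^ q = -t ∧ t ≠ 0 ∧ t * t = c + c ^ q) →
      Ncount F q c = 0 := by
    intro c hc0 hnt
    rw [Ncount, Finset.card_eq_zero, Finset.filter_eq_empty_iff]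
    intro y _ hy
    obtain ⟨a, t, haq, htq, hyat, htt, hat⟩ := hkey y c hy
    by_cases ht0 : t = 0
    · apply hc0
      rw [ht0] at htt hat
      have h2c : 2 * c = 0 := by linear_combination -htt - hat
      exact (mul_eq_zero.mp h2c).resolve_left h2ne
    · exact hnt ⟨t, htq, ht0, htt⟩
  -- relate deltaF/omegaF to Ncount
  have hD : ∀ x : F, (x + 1) ^ (q + 2) - x ^ (q + 2) = (x - 1) * ((x - 1) - (x - 1) ^ q) + 1 := by
    intro x
    have e1 : (x + 1) ^ (q + 2) = (x ^ q + 1) * (x + 1) ^ 2 := by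
      rw [pow_add, hfrob, one_pow]
    have e2 : (x : F) ^ (q + 2) = x ^ q * x ^ 2 := by rw [pow_add]
    have e3 : (x - 1) ^ q = x ^ q - 1 := by rw [hsubq, one_pow]
    rw [e1, e2, e3]
    linear_combination (x * x ^ q + x) * h3
  have hdelta : ∀ b : F, deltaF F (q + 2) b = Ncount F q (b - 1) := by
    intro b
    rw [deltaF, Ncount]
    apply Finset.card_nbij' (fun x => x - 1) (fun y => y + 1)
    · intro x hx
      simp only [Finset.mem_coe, Finset.mem_filter, Finset.mem_univ, true_and] at hx ⊢
      linear_combination hx - hD x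
    · intro y hy
      simp only [Finset.mem_coe, Finset.mem_filter, Finset.mem_univ, true_and] at hy ⊢
      have hDy := hD (y + 1)
      simp only [add_sub_cancel_right] at hDy
      linear_combination hy + hDy
    · intro x _
      ring
    · intro y _
      ring
  have homega : ∀ i : ℕ, omegaF F (q + 2) i =
      (Finset.univ.filter (fun c : F => Ncount F q c = i)).card := by
    intro i
    rw [omegaF]
    apply Finset.card_nbij' (fun b => b - 1) (fun c => c + 1)
    · intro b hb
      simp only [Finset.mem_coe, Finset.mem_filter, Finset.mem_univ, true_and] at hb ⊢
      rw [← hdelta b]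
      exact hb
    · intro c hc
      simp only [Finset.mem_coe, Finset.mem_filter, Finset.mem_univ, true_and] at hc ⊢
      rw [hdelta]
      simpa [add_sub_cancel_right] using hc
    · intro b _
      ring
    · intro c _
      ring
  -- the square-image set
  set Sf : Finset F := (Tf.erase 0).image (fun t => t * t) with hSfdef
  have hT0 : (0 : F) ∈ Tf := by
    rw [hTfdef, Finset.mem_filter]
    exact ⟨Finset.mem_univ _, by rw [zero_pow (by omega : q ≠ 0), neg_zero]⟩
  have hTe : (Tf.erase 0).card = q - 1 := by
    rw [Finset.card_erase_of_mem hT0, hTq]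
  have hSf2 : Sf.card * 2 = q - 1 := by
    rw [hSfdef, two_to_one_sq _ (Finset.notMem_erase _ _) ?_ h2ne, hTe]
    intro t ht
    rw [Finset.mem_erase] at ht ⊢
    obtain ⟨ht0, htT⟩ := ht
    rw [hTfdef, Finset.mem_filter] at htT ⊢
    exact ⟨neg_ne_zero.mpr ht0, Finset.mem_univ _, by rw [hneg, htT.2, neg_neg]⟩
  -- card of the Ncount = 2 set
  have hcard2 : (Finset.univ.filter (fun c : F => Ncount F q c = 2)).card = Sf.card * q := by
    have hbij : (Finset.univ.filter (fun c : F => Ncount F q c = 2)).card = (Sf ×ˢ Tf).card := by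
      apply Finset.card_nbij' (fun c => (c + c ^ q, c - c ^ q))
        (fun p => (p.1 + p.2) * 2)
      · intro c hc
        rw [Finset.mem_coe, Finset.mem_filter] at hc
        have hPc : ∃ t : F, t ^ q = -t ∧ t ≠ 0 ∧ t * t = c + c ^ q := by
          by_contra hcon
          by_cases hc0 : c = 0
          · rw [hc0, M1] at hc
            omega
          · rw [M3 c hc0 hcon] at hc
            omega
        obtain ⟨t, htq, ht0, htt⟩ := hPc
        rw [Finset.mem_coe, Finset.mem_product]
        dsimp only
        constructor
        · rw [hSfdef]
          apply Finset.mem_image.mpr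
          refine ⟨t, ?_, htt⟩
          rw [Finset.mem_erase, hTfdef, Finset.mem_filter]
          exact ⟨ht0, Finset.mem_univ _, htq⟩
        · rw [hTfdef, Finset.mem_filter]
          exact ⟨Finset.mem_univ _, by rw [hsubq, hiter]; ring⟩
      · intro p hp
        simp only [Finset.mem_coe] at hp
        rw [Finset.mem_product] at hp
        obtain ⟨hp1, hp2⟩ := hp
        rw [hSfdef] at hp1
        obtain ⟨t, hte, htp⟩ := Finset.mem_image.mp hp1
        rw [Finset.mem_erase, hTfdef, Finset.mem_filter] at hte
        have htq : t ^ q = -t := hte.2.2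
        rw [hTfdef, Finset.mem_filter] at hp2
        have hbq : p.2 ^ q = -p.2 := hp2.2
        simp only [Finset.mem_coe]
        rw [Finset.mem_filter]
        refine ⟨Finset.mem_univ _, ?_⟩
        apply M2 _ t htq hte.1
        have hp1q : p.1 ^ q = p.1 := by rw [← htp, mul_pow, htq]; ring
        have hcq : ((p.1 + p.2) * 2) ^ q = (p.1 - p.2) * 2 := by
          rw [mul_pow, hfrob, hp1q, hbq, h2q]
          ring
        rw [hcq]
        linear_combination htp - p.1 * h3
      · intro c hc
        simp only
        linear_combination c * h3
      · intro p hp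
        simp only [Finset.mem_coe] at hp
        rw [Finset.mem_product] at hp
        obtain ⟨hp1, hp2⟩ := hp
        rw [hSfdef] at hp1
        obtain ⟨t, hte, htp⟩ := Finset.mem_image.mp hp1
        rw [Finset.mem_erase, hTfdef, Finset.mem_filter] at hte
        have htq : t ^ q = -t := hte.2.2
        rw [hTfdef, Finset.mem_filter] at hp2
        have hbq : p.2 ^ q = -p.2 := hp2.2
        have hp1q : p.1 ^ q = p.1 := by rw [← htp, mul_pow, htq]; ring
        have hcq : ((p.1 + p.2) * 2) ^ q = (p.1 - p.2) * 2 := by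
          rw [mul_pow, hfrob, hp1q, hbq, h2q]
          ring
        have he1 : (p.1 + p.2) * 2 + ((p.1 + p.2) * 2) ^ q = p.1 := by
          rw [hcq]
          linear_combination p.1 * h3
        have he2 : (p.1 + p.2) * 2 - ((p.1 + p.2) * 2) ^ q = p.2 := by
          rw [hcq]
          linear_combination p.2 * h3
        exact Prod.ext he1 he2
    rw [hbij, Finset.card_product, hTq]
  -- card of the Ncount = q set
  have hcardq : (Finset.univ.filter (fun c : F => Ncount F q c = q)).card = 1 := by
    have hset : (Finset.univ.filter (fun c : F => Ncount F q c = q)) = {(0 : F)} := by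
      ext c
      simp only [Finset.mem_filter, Finset.mem_univ, true_and, Finset.mem_singleton]
      constructor
      · intro hc
        by_contra hc0
        by_cases hP : ∃ t : F, t ^ q = -t ∧ t ≠ 0 ∧ t * t = c + c ^ q
        · obtain ⟨t, ht1, ht2, ht3⟩ := hP
          rw [M2 c t ht1 ht2 ht3] at hc
          omega
        · rw [M3 c hc0 hP] at hc
          omega
      · rintro rfl
        exact M1
    rw [hset, Finset.card_singleton]
  -- card of the Ncount = 0 set
  have hcard0 : (Finset.univ.filter (fun c : F => Ncount F q c = 0)).card
      = q * q - (Sf.card * q + 1) := by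
    have hsplit := Finset.card_filter_add_card_filter_not
      (s := (Finset.univ : Finset F)) (p := fun c => Ncount F q c = 0)
    have hunion : (Finset.univ.filter (fun c : F => ¬ Ncount F q c = 0)) =
        (Finset.univ.filter (fun c : F => Ncount F q c = 2)) ∪
        (Finset.univ.filter (fun c : F => Ncount F q c = q)) := by
      ext c
      simp only [Finset.mem_filter, Finset.mem_univ, true_and, Finset.mem_union]
      constructor
      · intro hc
        by_cases hc0 : c = 0
        · right
          rw [hc0]
          exact M1
        · by_cases hP : ∃ t : F, t ^ q = -t ∧ t ≠ 0 ∧ t * t = c + c ^ q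
          · obtain ⟨t, ht1, ht2, ht3⟩ := hP
            left
            exact M2 c t ht1 ht2 ht3
          · exact absurd (M3 c hc0 hP) hc
      · rintro (h | h) <;> omega
    have hdisj : Disjoint (Finset.univ.filter (fun c : F => Ncount F q c = 2))
        (Finset.univ.filter (fun c : F => Ncount F q c = q)) := by
      rw [Finset.disjoint_left]
      intro c h1 h2
      rw [Finset.mem_filter] at h1 h2
      omega
    rw [hunion, Finset.card_union_of_disjoint hdisj, hcard2, hcardq, Finset.card_univ,
      hcard] at hsplit
    omega
  -- final assembly
  have h3n : 3 ^ (2 * m) = q * q := by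
    rw [hqdef, ← pow_add]
    congr 1
    omega
  have h2kq : Sf.card * q * 2 = q * q - q := by
    calc Sf.card * q * 2 = Sf.card * 2 * q := by ring
    _ = (q - 1) * q := by rw [hSf2]
    _ = q * q - q := by rw [Nat.sub_mul, one_mul]
  have hqle : q ≤ q * q := Nat.le_mul_of_pos_left q hq0
  refine ⟨?_, ?_, ?_, ?_⟩
  · rw [homega 0, hcard0, h3n]
    omega
  · rw [homega 2, hcard2, h3n]
    omega
  · rw [homega q, hcardq]
  · intro i hi1 hi2 hiq
    rw [homega i, Finset.card_eq_zero, Finset.filter_eq_empty_iff]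
    intro c _ hc
    by_cases hc0 : c = 0
    · rw [hc0, M1] at hc
      exact hiq hc.symm
    · by_cases hP : ∃ t : F, t ^ q = -t ∧ t ≠ 0 ∧ t * t = c + c ^ q
      · obtain ⟨t, ht1, ht2, ht3⟩ := hP
        rw [M2 c t ht1 ht2 ht3] at hc
        exact hi2 hc.symm
      · rw [M3 c hc0 hP] at hc
        omega
end

section
/- Let p > 3 be a prime, m a positive integer, and n = 2m. For the power mapping F(x) = x^{p^m+2} over F_{p^n}, one has δ(b) ∈ {0, 1, 2, 4} for every b ∈ F_{p^n}. -/
open Polynomial Finset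

theorem Finset.even_card_of_involution {ι : Type*} {s : Finset ι} (g : ι → ι)
    (hg_mem : ∀ a ∈ s, g a ∈ s) (hg_inv : ∀ a ∈ s, g (g a) = a)
    (hg_ne : ∀ a ∈ s, g a ≠ a) : Even #s := by
  rw [← ZMod.natCast_eq_zero_iff_even, card_eq_sum_ones, Nat.cast_sum, Nat.cast_one]
  exact sum_involution (fun a _ ↦ g a) (fun _ _ ↦ by decide) (fun a ha _ ↦ hg_ne a ha) hg_mem
    hg_inv

section CommRing

variable {R : Type*} [CommRing R]

theorem add_one_pow_sub_pow_neg_sub_one {d : ℕ} (hd : Odd d) (x : R) :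
    (-1 - x + 1) ^ d - (-1 - x) ^ d = (x + 1) ^ d - x ^ d := by
  rw [show -1 - x + 1 = -x by ring, show -1 - x = -(x + 1) by ring, hd.neg_pow, hd.neg_pow]
  ring

theorem add_one_pow_expChar_pow_add_two_sub_pow (p : ℕ) [ExpChar R p] (m : ℕ) (x : R) :
    (x + 1) ^ (p ^ m + 2) - x ^ (p ^ m + 2) =
      x ^ 2 + 2 * x * x ^ p ^ m + x ^ p ^ m + 2 * x + 1 := by
  rw [pow_add, pow_add, add_pow_expChar_pow]
  ring

/-- Eliminating `y` from `x² + 2xy + y + 2x + 1 = b` and `y² + 2xy + x + 2y + 1 = c`. -/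
noncomputable def deltaQuartic (b c : R) : R[X] :=
  (C b - (X + 1) ^ 2) ^ 2 + 2 * (X + 1) * (2 * X + 1) * (C b - (X + 1) ^ 2)
    + (2 * X + 1) ^ 2 * (X + 1 - C c)

theorem eval_deltaQuartic (b c x : R) :
    (deltaQuartic b c).eval x =
      (b - (x + 1) ^ 2) ^ 2 + 2 * (x + 1) * (2 * x + 1) * (b - (x + 1) ^ 2)
        + (2 * x + 1) ^ 2 * (x + 1 - c) := by
  simp [deltaQuartic]

theorem eval_deltaQuartic_eq_zero {b c x y : R} (hb : x ^ 2 + 2 * x * y + y + 2 * x + 1 = b)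
    (hc : y ^ 2 + 2 * x * y + x + 2 * y + 1 = c) : (deltaQuartic b c).eval x = 0 := by
  rw [eval_deltaQuartic]
  linear_combination (x ^ 2 + 2 * x + 1 - b - y * (2 * x + 1) - 2 * (2 * x + 1) * (x + 1)) * hb
    + (2 * x + 1) ^ 2 * hc

theorem natDegree_deltaQuartic [Nontrivial R] (h3 : (3 : R) ≠ 0) (b c : R) :
    (deltaQuartic b c).natDegree = 4 := by
  unfold deltaQuartic
  compute_degree!

end CommRing

section Field

variable {F : Type*} [Field F]

theorem eval_deltaQuartic_neg_half (h2 : (2 : F) ≠ 0) (b c : F) :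
    (deltaQuartic b c).eval (-2⁻¹) = (b - 4⁻¹) ^ 2 := by
  have h4 : (4 : F) ≠ 0 := by rw [show (4 : F) = 2 ^ 2 by norm_num]; exact pow_ne_zero 2 h2
  rw [eval_deltaQuartic]
  field_simp
  ring

theorem eval_deltaQuartic_inv_four (h2 : (2 : F) ≠ 0) (x : F) :
    (deltaQuartic 4⁻¹ 4⁻¹).eval x = -3 * (x + 2⁻¹) ^ 4 := by
  have h4 : (4 : F) ≠ 0 := by rw [show (4 : F) = 2 ^ 2 by norm_num]; exact pow_ne_zero 2 h2
  rw [eval_deltaQuartic]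
  field_simp
  ring

variable (p : ℕ) [ExpChar F p] (m : ℕ)

theorem eval_deltaQuartic_of_add_one_pow_sub_pow (hq : ∀ z : F, (z ^ p ^ m) ^ p ^ m = z)
    {b x : F} (hx : (x + 1) ^ (p ^ m + 2) - x ^ (p ^ m + 2) = b) :
    (deltaQuartic b (b ^ p ^ m)).eval x = 0 := by
  rw [add_one_pow_expChar_pow_add_two_sub_pow] at hx
  refine eval_deltaQuartic_eq_zero hx ?_
  have hconj := congrArg (iterateFrobenius F p m) hx
  simp only [map_add, map_mul, map_pow, map_one, map_ofNat, iterateFrobenius_def, hq] at hconj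
  linear_combination hconj

end Field

section FiniteField

variable {F : Type*} [Field F] [Fintype F] [DecidableEq F]

theorem even_deltaF {d : ℕ} (hd : Odd d) (h2 : (2 : F) ≠ 0) {b : F}
    (hb : (-2⁻¹ + 1) ^ d - (-2⁻¹) ^ d ≠ b) : Even (deltaF F d b) := by
  refine even_card_of_involution (fun x ↦ -1 - x) (fun x hx ↦ ?_) (fun x _ ↦ by ring)
    (fun x hx hfix ↦ ?_) <;> rw [mem_filter_univ] at hx
  · rw [mem_filter_univ]
    rwa [add_one_pow_sub_pow_neg_sub_one hd]
  · have : x = -2⁻¹ := by linear_combination (-2⁻¹ : F) * hfix - x * mul_inv_cancel₀ h2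
    exact hb (this ▸ hx)

variable (p : ℕ) [ExpChar F p] (m : ℕ) (hq : ∀ z : F, (z ^ p ^ m) ^ p ^ m = z)
include hq

theorem deltaF_le_four (h3 : (3 : F) ≠ 0) (b : F) : deltaF F (p ^ m + 2) b ≤ 4 := by
  have hdeg := natDegree_deltaQuartic h3 b (b ^ p ^ m)
  rw [← hdeg]
  refine card_le_degree_of_subset_roots fun x hx ↦ ?_
  rw [mem_val, mem_filter_univ] at hx
  rw [mem_roots (ne_zero_of_natDegree_gt (hdeg ▸ four_pos))]
  exact eval_deltaQuartic_of_add_one_pow_sub_pow p m hq hx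

theorem deltaF_le_one (h2 : (2 : F) ≠ 0) (h3 : (3 : F) ≠ 0) {b : F}
    (hb : (-2⁻¹ + 1) ^ (p ^ m + 2) - (-2⁻¹) ^ (p ^ m + 2) = b) :
    deltaF F (p ^ m + 2) b ≤ 1 := by
  have hb4 : b = 4⁻¹ := by
    have := eval_deltaQuartic_of_add_one_pow_sub_pow p m hq hb
    rw [eval_deltaQuartic_neg_half h2] at this
    exact sub_eq_zero.mp (pow_eq_zero_iff two_ne_zero |>.mp this)
  have hb4q : b ^ p ^ m = 4⁻¹ := by
    rw [hb4, ← iterateFrobenius_def, map_inv₀, map_ofNat]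
  have eq_neg_half (x : F) (hx : (x + 1) ^ (p ^ m + 2) - x ^ (p ^ m + 2) = b) : x = -2⁻¹ := by
    have := eval_deltaQuartic_of_add_one_pow_sub_pow p m hq hx
    rw [hb4q, hb4, eval_deltaQuartic_inv_four h2, mul_eq_zero, pow_eq_zero_iff four_ne_zero] at this
    exact eq_neg_of_add_eq_zero_left (this.resolve_left (neg_ne_zero.mpr h3))
  exact card_le_one.mpr fun x hx y hy ↦
    (eq_neg_half x (mem_filter.mp hx).2).trans (eq_neg_half y (mem_filter.mp hy).2).symm

theorem deltaF_mem (hp : Odd p) (h2 : (2 : F) ≠ 0) (h3 : (3 : F) ≠ 0) (b : F) :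
    deltaF F (p ^ m + 2) b ∈ ({0, 1, 2, 4} : Set ℕ) := by
  simp only [Set.mem_insert_iff, Set.mem_singleton_iff]
  by_cases hb : (-2⁻¹ + 1) ^ (p ^ m + 2) - (-2⁻¹) ^ (p ^ m + 2) = b
  · have := deltaF_le_one p m hq h2 h3 hb
    omega
  · obtain ⟨k, hk⟩ := even_deltaF (hp.pow.add_even even_two) h2 hb
    have := deltaF_le_four p m hq h3 b
    omega

end FiniteField

theorem stmt8_general (p : ℕ) (hp : p.Prime) (hp3 : 3 < p) (m : ℕ) (n : ℕ)
    (hn : n = 2 * m)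
    (F : Type*) [Field F] [Fintype F] [DecidableEq F]
    (hF : Fintype.card F = p ^ n) :
    ∀ b : F, deltaF F (p ^ m + 2) b ∈ ({0, 1, 2, 4} : Set ℕ) := by
  have : Fact p.Prime := ⟨hp⟩
  have : CharP F p := charP_of_card_eq_prime_pow hF
  have hq (z : F) : (z ^ p ^ m) ^ p ^ m = z := by
    rw [← pow_mul, ← pow_two, ← pow_mul, mul_comm, ← hn, ← hF, FiniteField.pow_card]
  have hcast {k : ℕ} (hk : 0 < k) (hkp : k < p) : (k : F) ≠ 0 := by
    rw [Ne, CharP.cast_eq_zero_iff F p]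
    exact Nat.not_dvd_of_pos_of_lt hk hkp
  exact deltaF_mem p m hq (hp.odd_of_ne_two (by omega))
    (mod_cast hcast (k := 2) two_pos (by omega)) (mod_cast hcast (k := 3) three_pos hp3)

/-- For `x^(p^m+2)` over `F_{p^n}` with `p > 3` prime and `n = 2m`:
`δ(b) ∈ {0, 1, 2, 4}` for every `b`. -/
theorem stmt8 (p : ℕ) (hp : p.Prime) (hp3 : 3 < p) (m : ℕ) (hm : 0 < m) (n : ℕ)
    (hn : n = 2 * m)
    (F : Type*) [Field F] [Fintype F] [DecidableEq F]
    (hF : Fintype.card F = p ^ n) :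
    ∀ b : F, deltaF F (p ^ m + 2) b ∈ ({0, 1, 2, 4} : Set ℕ) :=
  stmt8_general p hp hp3 m n hn F hF
end

section
/- Let p > 3 be a prime, m a positive integer, and n = 2m. If p^m ≡ 1 (mod 3), then for every nonzero c ∈ F_{p^n}, the element D = c̄^2 - c̄·c + c^2 is nonzero, where c̄ = c^{p^m}. -/
/-!
Put `q = p ^ m` and `y = c ^ (q - 1)`, so that `c̄ = y c` and `D = c² (y² - y + 1)`. A root `y` of
`X² - X + 1` satisfies `y³ = -1`, hence `y⁶ = 1`, while `y ^ (q + 1) = c ^ (q² - 1) = 1`. As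
`q ≡ 1 (mod 6)`, these give `y² = 1`; together with `y² - y + 1 = 0` this forces `y = 2` and then
`3 = 0`, which is impossible in characteristic `p > 3`.
-/

lemma sq_sub_self_add_one_ne_zero_of_pow_succ_eq_one {R : Type*} [CommRing R] (h3 : (3 : R) ≠ 0)
    {q : ℕ} (hq : q % 6 = 1) {y : R} (hy : y ^ (q + 1) = 1) : y ^ 2 - y + 1 ≠ 0 := by
  intro hroot
  have hcube : y ^ 3 = -1 := by linear_combination (y + 1) * hroot
  have hsq : y ^ 2 = 1 := by
    obtain ⟨k, rfl⟩ : ∃ k, q = 6 * k + 1 := ⟨q / 6, by omega⟩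
    calc y ^ 2 = (y ^ 3) ^ (2 * k) * y ^ 2 := by rw [hcube, pow_mul, neg_one_sq, one_pow, one_mul]
      _ = y ^ (6 * k + 1 + 1) := by rw [← pow_mul, ← pow_add]; ring_nf
      _ = 1 := hy
  exact h3 (by linear_combination (y + 2) * hroot - (y + 1) * hsq)

lemma FiniteField.pow_sub_one_pow_add_one_eq_one {K : Type*} [Field K] [Fintype K] {q : ℕ}
    (hK : Fintype.card K = q ^ 2) {a : K} (ha : a ≠ 0) : (a ^ (q - 1)) ^ (q + 1) = 1 := by
  have hexp : (q - 1) * (q + 1) = Fintype.card K - 1 := by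
    rw [hK, mul_comm, ← Nat.sq_sub_sq, one_pow]
  rw [← pow_mul, hexp, FiniteField.pow_card_sub_one_eq_one a ha]

lemma CharP.ofNat_three_ne_zero {R : Type*} [AddMonoidWithOne R] {p : ℕ} [CharP R p]
    (hp3 : 3 < p) : (3 : R) ≠ 0 := by
  rw [← Nat.cast_ofNat, ne_eq, CharP.cast_eq_zero_iff R p]
  exact Nat.not_dvd_of_pos_of_lt three_pos hp3

theorem stmt10_general (p : ℕ) (hp : p.Prime) (hp3 : 3 < p) (m : ℕ) (n : ℕ)
    (hn : n = 2 * m) (hmod : p ^ m % 3 = 1)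
    (F : Type*) [Field F] [Fintype F]
    (hF : Fintype.card F = p ^ n) :
    ∀ c : F, c ≠ 0 → (c ^ p ^ m) ^ 2 - c ^ p ^ m * c + c ^ 2 ≠ 0 := by
  intro c hc
  have : Fact p.Prime := ⟨hp⟩
  have : CharP F p := charP_of_card_eq_prime_pow hF
  have hq_odd : Odd (p ^ m) := (hp.odd_of_ne_two (by omega)).pow
  have hq : p ^ m % 6 = 1 := by have := Nat.odd_iff.mp hq_odd; omega
  have hcard : Fintype.card F = (p ^ m) ^ 2 := by rw [hF, hn, pow_mul']
  set y := c ^ (p ^ m - 1)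
  have hconj : c ^ p ^ m = y * c := pow_sub_one_mul (pow_ne_zero m hp.ne_zero) c |>.symm
  rw [hconj, show (y * c) ^ 2 - y * c * c + c ^ 2 = c ^ 2 * (y ^ 2 - y + 1) by ring]
  exact mul_ne_zero (pow_ne_zero 2 hc) <| sq_sub_self_add_one_ne_zero_of_pow_succ_eq_one
    (CharP.ofNat_three_ne_zero hp3) hq (FiniteField.pow_sub_one_pow_add_one_eq_one hcard hc)

/-- Let `p > 3` be prime, `n = 2m`, `p^m ≡ 1 (mod 3)`. For every nonzero `c` in `F_{p^n}`,
`D = c̄² - c̄·c + c² ≠ 0`, where `c̄ = c^(p^m)`. -/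
theorem stmt10 (p : ℕ) (hp : p.Prime) (hp3 : 3 < p) (m : ℕ) (hm : 0 < m) (n : ℕ)
    (hn : n = 2 * m) (hmod : p ^ m % 3 = 1)
    (F : Type*) [Field F] [Fintype F]
    (hF : Fintype.card F = p ^ n) :
    ∀ c : F, c ≠ 0 → (c ^ p ^ m) ^ 2 - c ^ p ^ m * c + c ^ 2 ≠ 0 :=
  stmt10_general p hp hp3 m n hn hmod F hF
end

section
/- Let p > 3 be a prime, m a positive integer, and n = 2m, and suppose p^m ≡ 2 (mod 3). Let α be a generator of the multiplicative group of F_{p^n}. For nonzero c ∈ F_{p^n}, the element D = c̄^2 - c̄·c + c^2 equals zero (where c̄ = c^{p^m}) if and only if there exists j ∈ {0, 1, ..., p^m - 2} such that c = α^{(p^m+1)/6 + j(p^m+1)} or c = α^{5(p^m+1)/6 + j(p^m+1)}. -/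
/-!
With `q = p^m` and `c ≠ 0` we have `D = c² (x² - x + 1)` for `x = c^(q-1)`, and `X² - X + 1` is
the sixth cyclotomic polynomial, whose roots (as `6 ≠ 0` in characteristic `p > 3`) are the
primitive sixth roots of unity `β, β⁵` with `β = α^((q+1)/6 · (q-1))`; here `6 ∣ q + 1` because
`q` is odd and `q ≡ 2 (mod 3)`. Since `α` has order `(q-1)(q+1)`, writing `c = α^k` the equation
`c^(q-1) = α^(e(q-1))` amounts to `k ≡ e (mod q+1)`.
-/

open Polynomial

theorem pow_eq_pow_mul_iff_exists_eq_pow_add_mul {G : Type*} [Monoid G] {g x : G}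
    {a b e : ℕ} (hg : orderOf g = a * b) (hx : x ∈ Submonoid.powers g) (ha : 0 < a)
    (he : e < b) : x ^ a = g ^ (e * a) ↔ ∃ j < a, x = g ^ (e + j * b) := by
  have hab : 0 < a * b := Nat.mul_pos ha (by omega)
  constructor
  · obtain ⟨k, hk, rfl⟩ : ∃ k < a * b, g ^ k = x := by
      obtain ⟨k, rfl⟩ := Submonoid.mem_powers_iff _ _ |>.1 hx
      exact ⟨k % (a * b), Nat.mod_lt _ hab, by rw [← hg, pow_mod_orderOf]⟩
    intro h
    have hmod : k ≡ e [MOD b] := by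
      rw [← pow_mul, (orderOf_pos_iff.1 (hg ▸ hab)).pow_eq_pow_iff_modEq, hg, mul_comm a b] at h
      exact Nat.ModEq.mul_right_cancel' ha.ne' h
    have hke : k % b = e := Eq.trans hmod (Nat.mod_eq_of_lt he)
    refine ⟨k / b, (Nat.div_lt_iff_lt_mul (by omega)).2 hk, ?_⟩
    rw [← hke, mul_comm, Nat.mod_add_div]
  · rintro ⟨j, -, rfl⟩
    rw [← pow_mul, add_mul, pow_add, mul_assoc, mul_comm b a, ← hg, mul_comm j,
      pow_mul g (orderOf g), pow_orderOf_eq_one, one_pow, mul_one]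

theorem IsPrimitiveRoot.isPrimitiveRoot_six_iff {R : Type*} [CommRing R] [IsDomain R] {β x : R}
    (hβ : IsPrimitiveRoot β 6) : IsPrimitiveRoot x 6 ↔ x = β ∨ x = β ^ 5 := by
  constructor
  · intro hx
    obtain ⟨i, hi, rfl⟩ := hβ.eq_pow_of_pow_eq_one hx.pow_eq_one
    have hcop := (hβ.pow_iff_coprime (by norm_num) i).1 hx
    interval_cases i <;> simp_all +decide
  · rintro (rfl | rfl)
    · exact hβ
    · exact (hβ.pow_iff_coprime (by norm_num) 5).2 (by norm_num)

theorem IsPrimitiveRoot.sq_sub_add_one_eq_zero_iff {R : Type*} [CommRing R] [IsDomain R]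
    [NeZero ((6 : ℕ) : R)] {β : R} (hβ : IsPrimitiveRoot β 6) (x : R) :
    x ^ 2 - x + 1 = 0 ↔ x = β ∨ x = β ^ 5 := by
  rw [← hβ.isPrimitiveRoot_six_iff, ← isRoot_cyclotomic_iff, cyclotomic_six]
  simp

theorem stmt11_general (p : ℕ) (hp : p.Prime) (hp3 : 3 < p) (m : ℕ) (n : ℕ)
    (hn : n = 2 * m) (hmod : p ^ m % 3 = 2)
    (F : Type*) [Field F] [Fintype F]
    (hF : Fintype.card F = p ^ n)
    (α : F) (hα : orderOf α = p ^ n - 1) :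
    ∀ c : F, c ≠ 0 →
      ((c ^ p ^ m) ^ 2 - c ^ p ^ m * c + c ^ 2 = 0 ↔
        ∃ j, j < p ^ m - 1 ∧
          (c = α ^ ((p ^ m + 1) / 6 + j * (p ^ m + 1)) ∨
           c = α ^ (5 * (p ^ m + 1) / 6 + j * (p ^ m + 1)))) := by
  intro c hc
  set q := p ^ m
  have hq6 : q % 6 = 5 := by
    have : q % 2 = 1 := Nat.odd_iff.1 (hp.odd_of_ne_two (by omega)).pow
    omega
  obtain ⟨t, ht⟩ : 6 ∣ q + 1 := by omega
  rw [show (q + 1) / 6 = t by omega, show 5 * (q + 1) / 6 = 5 * t by omega]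
  have hN : p ^ n - 1 = (q - 1) * (q + 1) := by
    rw [hn, pow_mul']
    simpa [mul_comm] using Nat.sq_sub_sq q 1
  have hαord : orderOf α = (q - 1) * (q + 1) := hα.trans hN
  have hαprim : IsPrimitiveRoot α ((q - 1) * (q + 1)) := hαord ▸ IsPrimitiveRoot.orderOf α
  have hβ : IsPrimitiveRoot (α ^ (t * (q - 1))) 6 :=
    hαprim.pow (Nat.mul_pos (by omega) (by omega)) (by rw [ht]; ring)
  have : Fact p.Prime := ⟨hp⟩
  have : CharP F p := charP_of_card_eq_prime_pow hF
  have : NeZero ((6 : ℕ) : F) := NeZero.of_not_dvd F (p := p) fun h => by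
    rcases hp.dvd_mul.1 (show p ∣ 2 * 3 from h) with h | h <;>
      linarith [Nat.le_of_dvd (by norm_num) h]
  have hcα : c ∈ Submonoid.powers α := by
    have : NeZero ((q - 1) * (q + 1)) := ⟨Nat.mul_ne_zero (by omega) (by omega)⟩
    obtain ⟨k, -, hk⟩ := hαprim.eq_pow_of_pow_eq_one (by
      rw [← hN, ← hF]; exact FiniteField.pow_card_sub_one_eq_one c hc)
    exact ⟨k, hk⟩
  have hD : (c ^ q) ^ 2 - c ^ q * c + c ^ 2 = c ^ 2 * ((c ^ (q - 1)) ^ 2 - c ^ (q - 1) + 1) := by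
    rw [← Nat.sub_add_cancel (show 1 ≤ q by omega), pow_succ, Nat.add_sub_cancel]; ring
  rw [hD, mul_eq_zero, or_iff_right (pow_ne_zero 2 hc), hβ.sq_sub_add_one_eq_zero_iff, ← pow_mul,
    show t * (q - 1) * 5 = 5 * t * (q - 1) by ring,
    pow_eq_pow_mul_iff_exists_eq_pow_add_mul hαord hcα (e := t) (by omega) (by omega),
    pow_eq_pow_mul_iff_exists_eq_pow_add_mul hαord hcα (e := 5 * t) (by omega) (by omega)]
  simp only [and_or_left, exists_or]

/-- Let `p > 3` be prime, `n = 2m`, `p^m ≡ 2 (mod 3)`, and `α` a generator of the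
multiplicative group of `F_{p^n}`. For nonzero `c`, `D = c̄² - c̄·c + c² = 0` (with
`c̄ = c^(p^m)`) iff `c = α^((p^m+1)/6 + j(p^m+1))` or `c = α^(5(p^m+1)/6 + j(p^m+1))`
for some `j ∈ {0, 1, ..., p^m - 2}`. -/
theorem stmt11 (p : ℕ) (hp : p.Prime) (hp3 : 3 < p) (m : ℕ) (hm : 0 < m) (n : ℕ)
    (hn : n = 2 * m) (hmod : p ^ m % 3 = 2)
    (F : Type*) [Field F] [Fintype F]
    (hF : Fintype.card F = p ^ n)
    (α : F) (hα : orderOf α = p ^ n - 1) :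
    ∀ c : F, c ≠ 0 →
      ((c ^ p ^ m) ^ 2 - c ^ p ^ m * c + c ^ 2 = 0 ↔
        ∃ j, j < p ^ m - 1 ∧
          (c = α ^ ((p ^ m + 1) / 6 + j * (p ^ m + 1)) ∨
           c = α ^ (5 * (p ^ m + 1) / 6 + j * (p ^ m + 1)))) :=
  stmt11_general p hp hp3 m n hn hmod F hF α hα
end

section
/- Let p > 3 be a prime, m a positive integer, and n = 2m, and suppose p^m ≡ 2 (mod 3). For every nonzero c ∈ F_{p^n} such that D = c̄^2 - c̄·c + c^2 ≠ 0 (where c̄ = c^{p^m}), the number of y ∈ F_{p^n} satisfying 8y·y^{p^m} + 4y^2 - c = 0 is not equal to 2. -/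
/-- Let `p > 3` be prime, `n = 2m`, `p^m ≡ 2 (mod 3)`. For every nonzero `c` in `F_{p^n}`
with `D = c̄² - c̄·c + c² ≠ 0` (where `c̄ = c^(p^m)`), the equation
`8·y·y^(p^m) + 4·y² - c = 0` does not have exactly two solutions `y` in `F_{p^n}`. -/
theorem stmt12 (p : ℕ) (hp : p.Prime) (hp3 : 3 < p) (m : ℕ) (hm : 0 < m) (n : ℕ)
    (hn : n = 2 * m) (hmod : p ^ m % 3 = 2)
    (F : Type*) [Field F] [Fintype F] [DecidableEq F]
    (hF : Fintype.card F = p ^ n) :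
    ∀ c : F, c ≠ 0 → (c ^ p ^ m) ^ 2 - c ^ p ^ m * c + c ^ 2 ≠ 0 →
      (Finset.univ.filter (fun y : F => 8 * y * y ^ p ^ m + 4 * y ^ 2 - c = 0)).card ≠ 2 := by
  haveI := Fact.mk hp
  -- characteristic
  have hchar : CharP F p := by
    obtain ⟨r, hr⟩ := CharP.exists F
    haveI := hr
    obtain ⟨k, hk, hcard⟩ := FiniteField.card F r
    have hdvd : r ∣ p ^ n := by
      rw [← hF, hcard]
      exact dvd_pow_self r (by exact_mod_cast k.pos.ne')
    have : r = p :=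
      (Nat.prime_dvd_prime_iff_eq hk hp).mp (hk.dvd_of_dvd_pow hdvd)
    rwa [this] at hr
  haveI := hchar
  haveI : ExpChar F p := ExpChar.prime hp
  set q := p ^ m with hqdef
  have hq0 : q ≠ 0 := pow_ne_zero m hp.pos.ne'
  have hq2 : 2 ≤ q := by omega
  have hcard2 : Fintype.card F = q ^ 2 := by rw [hF, hn, hqdef, ← pow_mul, Nat.mul_comm]
  have hqodd : Odd q := (hp.odd_of_ne_two (by omega)).pow
  -- basic frobenius facts
  have hfrob2 : ∀ x : F, (x ^ q) ^ q = x := by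
    intro x
    rw [← pow_mul, ← sq, ← hcard2]
    exact FiniteField.pow_card x
  have hadd : ∀ x y : F, (x + y) ^ q = x ^ q + y ^ q := fun x y => by rw [hqdef]; exact add_pow_char_pow x y p m
  have hneg : ∀ x : F, (-x) ^ q = -(x ^ q) := fun x => Odd.neg_pow hqodd x
  have hnat : ∀ k : ℕ, ((k : F)) ^ q = k := by
    intro k
    induction k with
    | zero => simp [zero_pow hq0]
    | succ k ih => push_cast; rw [hadd, ih, one_pow]
  have h8 : (8:F) ^ q = 8 := by have := hnat 8; push_cast at this; exact this
  have h4 : (4:F) ^ q = 4 := by have := hnat 4; push_cast at this; exact this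
  have h2 : (2:F) ^ q = 2 := by have := hnat 2; push_cast at this; exact this
  have h3q : (3:F) ^ q = 3 := by have := hnat 3; push_cast at this; exact this
  have h3F : (3:F) ≠ 0 := by
    intro h
    have := (CharP.cast_eq_zero_iff F p 3).mp (by exact_mod_cast h)
    have := Nat.le_of_dvd (by norm_num) this
    omega
  have h2F : (2:F) ≠ 0 := by
    intro h
    have := (CharP.cast_eq_zero_iff F p 2).mp (by exact_mod_cast h)
    have := Nat.le_of_dvd (by norm_num) this
    omega
  have hn3 : (-3 : F) ≠ 0 := neg_ne_zero.mpr h3F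
  have hn3q : (-3 : F) ^ q = -3 := by rw [hneg, h3q]
  -- existence of κ with κ^2 = -3
  obtain ⟨κ, hκ⟩ : ∃ κ : F, κ ^ 2 = -3 := by
    have hringchar : ringChar F ≠ 2 := by
      rw [ringChar.eq F p]; omega
    have hpow : (-3 : F) ^ (Fintype.card F / 2) = 1 := by
      obtain ⟨k, hk⟩ := hqodd
      have hdiv : Fintype.card F / 2 = (q - 1) * ((q + 1) / 2) := by
        rw [hcard2]
        have h1 : q ^ 2 = 2 * (2 * k ^ 2 + 2 * k) + 1 := by rw [hk]; ring
        have h2' : (q - 1) * ((q + 1) / 2) = 2 * k ^ 2 + 2 * k := by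
          rw [hk]
          have e1 : (2 * k + 1 + 1) / 2 = k + 1 := by omega
          have e2 : 2 * k + 1 - 1 = 2 * k := by omega
          rw [e1, e2]; ring
        omega
      have hq1 : (-3 : F) ^ (q - 1) = 1 := by
        have hstep : (-3 : F) ^ (q - 1) * (-3) = (-3 : F) ^ q := by
          rw [← pow_succ]
          congr 1
          omega
        have h' : (-3 : F) ^ (q - 1) * (-3) = 1 * (-3) := by
          rw [hstep, hn3q, one_mul]
        exact mul_right_cancel₀ hn3 h'
      rw [hdiv, pow_mul, hq1, one_pow]
    obtain ⟨x, hx⟩ := (FiniteField.isSquare_iff hringchar hn3).mpr hpow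
    exact ⟨x, by rw [sq]; exact hx.symm⟩
  have hκ0 : κ ≠ 0 := by
    intro h
    rw [h] at hκ
    exact hn3 (by rw [← hκ]; ring)
  -- κ^q = -κ
  have hκq : κ ^ q = -κ := by
    have hsq : (κ ^ q) ^ 2 = -3 := by
      rw [← pow_mul, mul_comm, pow_mul, hκ, hn3q]
    have hfac : (κ ^ q - κ) * (κ ^ q + κ) = 0 := by linear_combination hsq - hκ
    rcases mul_eq_zero.mp hfac with h | h
    · exfalso
      have hfix : κ ^ q = κ := sub_eq_zero.mp h
      set ω : F := (-1 + κ) / 2 with hω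
      have hω3 : ω ^ 3 = 1 := by
        rw [hω]
        field_simp
        linear_combination (κ - 3) * hκ
      have hω1 : ω ≠ 1 := by
        intro h1
        rw [hω] at h1
        have hk3 : κ = 3 := by field_simp at h1; linear_combination h1
        have h12 : (12 : F) = 0 := by
          rw [hk3] at hκ; linear_combination hκ
        have hdvd : p ∣ 12 := (CharP.cast_eq_zero_iff F p 12).mp (by exact_mod_cast h12)
        have hle : p ≤ 12 := Nat.le_of_dvd (by norm_num) hdvd
        interval_cases p <;> revert hdvd hp <;> decide
      have hω0 : ω ≠ 0 := by
        intro h0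
        rw [h0] at hω3
        simp at hω3
      have hωq : ω ^ q = ω := by
        rw [hω, div_pow, h2]
        congr 1
        have : (-1 + κ : F) = -1 + κ := rfl
        rw [hadd, hfix]
        congr 1
        rw [show (-1 : F) = -(1:F) by ring, hneg, one_pow]
      have hord : ω ^ (q - 1) = 1 := by
        have hstep : ω ^ (q - 1) * ω = ω ^ q := by
          rw [← pow_succ]
          congr 1
          omega
        have : ω ^ (q - 1) * ω = 1 * ω := by rw [hstep, hωq, one_mul]
        exact mul_right_cancel₀ hω0 this
      haveI : Fact (Nat.Prime 3) := ⟨by norm_num⟩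
      have horder : orderOf ω = 3 := orderOf_eq_prime hω3 hω1
      have hdvd3 : 3 ∣ q - 1 := horder ▸ orderOf_dvd_of_pow_eq_one hord
      omega
    · exact eq_neg_of_add_eq_zero_left h
  -- conjugation of the equation
  have hsqq : ∀ x : F, (x ^ 2) ^ q = (x ^ q) ^ 2 := fun x => by
    rw [← pow_mul, mul_comm, pow_mul]
  have hconj : ∀ x : F, (8 * x * x ^ q + 4 * x ^ 2) ^ q
      = 8 * x ^ q * x + 4 * (x ^ q) ^ 2 := by
    intro x
    rw [hadd, mul_pow, mul_pow, mul_pow, h8, h4, hsqq, hfrob2]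
  -- main argument
  intro c hc hD hcard
  set S := Finset.univ.filter (fun y : F => 8 * y * y ^ q + 4 * y ^ 2 - c = 0) with hS
  have hmem : ∀ y : F, y ∈ S ↔ 8 * y * y ^ q + 4 * y ^ 2 - c = 0 := by
    intro y; simp [hS]
  obtain ⟨a, b, hab, hSeq⟩ := Finset.card_eq_two.mp hcard
  have ha : 8 * a * a ^ q + 4 * a ^ 2 - c = 0 := by
    have : a ∈ S := by rw [hSeq]; exact Finset.mem_insert_self a {b}
    exact (hmem a).mp this
  have ha0 : a ≠ 0 := by
    rintro rfl
    rw [zero_pow hq0] at ha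
    apply hc
    linear_combination -ha
  -- -a is a solution
  have hna : -a ∈ S := by
    rw [hmem]
    rw [hneg]
    linear_combination ha
  have hnab : -a = b := by
    rw [hSeq] at hna
    rcases Finset.mem_insert.mp hna with h | h
    · exfalso
      apply ha0
      have : (2:F) * a = 0 := by linear_combination -h
      rcases mul_eq_zero.mp this with h' | h'
      · exact absurd h' h2F
      · exact h'
    · exact Finset.mem_singleton.mp h
  -- conjugate equation for a
  have hac : 8 * a ^ q * a + 4 * (a ^ q) ^ 2 - c ^ q = 0 := by
    have h1 : 8 * a * a ^ q + 4 * a ^ 2 = c := by linear_combination ha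
    have h2' : (8 * a * a ^ q + 4 * a ^ 2) ^ q = c ^ q := by rw [h1]
    rw [hconj] at h2'
    linear_combination h2'
  -- T a is a solution
  have hT : -(a + 2 * a ^ q) / κ ∈ S := by
    rw [hmem]
    have hTq : (-(a + 2 * a ^ q) / κ) ^ q = (a ^ q + 2 * a) / κ := by
      rw [div_pow, hκq, hneg, hadd, mul_pow, h2, hfrob2, neg_div, div_neg, neg_neg]
    rw [hTq]
    have hnum : -8 * (a + 2 * a ^ q) * (a ^ q + 2 * a) + 4 * (a + 2 * a ^ q) ^ 2 - c * κ ^ 2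
        = 0 := by
      linear_combination (-3 : F) * ha - c * hκ
    have hsplit : 8 * (-(a + 2 * a ^ q) / κ) * ((a ^ q + 2 * a) / κ)
          + 4 * (-(a + 2 * a ^ q) / κ) ^ 2 - c
        = (-8 * (a + 2 * a ^ q) * (a ^ q + 2 * a) + 4 * (a + 2 * a ^ q) ^ 2 - c * κ ^ 2)
            / κ ^ 2 := by
      field_simp
    rw [hsplit, hnum, zero_div]
  rw [hSeq] at hT
  rcases Finset.mem_insert.mp hT with hfix | hfix
  · -- T a = a
    have hlin : 2 * a ^ q + (1 + κ) * a = 0 := by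
      rw [div_eq_iff hκ0] at hfix
      linear_combination -hfix
    have hc2 : c = -4 * κ * a ^ 2 := by
      linear_combination (-1 : F) * ha + (4 * a) * hlin
    have hc1 : c ^ q = (-2 * κ - 6) * a ^ 2 := by
      linear_combination (-1 : F) * hac + (2 * a ^ q + (3 - κ) * a) * hlin + a ^ 2 * hκ
    apply hD
    rw [hc1, hc2]
    linear_combination (12 * a ^ 4) * hκ
  · -- T a = b = -a
    rw [Finset.mem_singleton] at hfix
    rw [← hnab] at hfix
    have hlin : 2 * a ^ q + (1 - κ) * a = 0 := by
      rw [div_eq_iff hκ0] at hfix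
      linear_combination -hfix
    have hc2 : c = 4 * κ * a ^ 2 := by
      linear_combination (-1 : F) * ha + (4 * a) * hlin
    have hc1 : c ^ q = (2 * κ - 6) * a ^ 2 := by
      linear_combination (-1 : F) * hac + (2 * a ^ q + (3 + κ) * a) * hlin + a ^ 2 * hκ
    apply hD
    rw [hc1, hc2]
    linear_combination (12 * a ^ 4) * hκ
end

section
/- Let p > 3 be a prime, m a positive integer, and n = 2m, and suppose p^m ≡ 1 (mod 3). Then for every c ∈ F_{p^n}, the number of y ∈ F_{p^n} satisfying 8y·y^{p^m} + 4y^2 - c = 0 is not equal to 4. -/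
/-!
Let `σ(y) = y ^ (p ^ m)`, the involution of `F` over `F_{p^m}`, and let `r ∈ F_{p^m}` with
`r² = -3` (it exists because `3 ∣ p^m - 1`). For `s = y + σ y` and `d = y - σ y` the equation
reads `c = 3s² - d² + 2sd`, so `c` and `σ c` determine `(d + rs)² = d² - 3s² + 2rsd`.
Since `twist σ r : y ↦ d + rs` is injective, the solutions inject into the square roots of
one element of `F`, so there are at most two of them.
-/

open Finset Polynomial

section Twist

variable {K : Type*} [Field K] (σ : K →+* K) (r : K)

def twist (y : K) : K := (1 + r) * y + (r - 1) * σ y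

variable {σ r}

lemma two_mul_twist_sq {y c : K} (hσ : Function.Involutive σ) (hr : r ^ 2 = -3)
    (hy : 8 * y * σ y + 4 * y ^ 2 = c) :
    2 * twist σ r y ^ 2 = (r - 1) * c - (r + 1) * σ c := by
  subst hy
  simp only [twist, map_add, map_mul, map_pow, map_ofNat, hσ _]
  linear_combination (2 * y ^ 2 + 4 * y * σ y + 2 * σ y ^ 2) * hr

lemma twist_injective (h2 : (2 : K) ≠ 0) (hr : r ≠ 0) (hσ : Function.Involutive σ)
    (hσr : σ r = r) : Function.Injective (twist σ r) := by
  intro y y' h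
  have he : (1 + r) * (y - y') + (r - 1) * σ (y - y') = 0 := by
    simp only [twist] at h
    rw [map_sub]
    linear_combination h
  have hσe : (1 + r) * σ (y - y') + (r - 1) * (y - y') = 0 := by
    simpa only [map_add, map_mul, map_one, map_sub, hσr, hσ _, map_zero] using congrArg σ he
  have h4r : (2 * 2 * r) * (y - y') = 0 := by
    linear_combination (1 + r) * he - (r - 1) * hσe
  exact sub_eq_zero.mp ((mul_eq_zero.mp h4r).resolve_left (by simp [h2, hr]))

lemma card_solutions_le_two [Fintype K] [DecidableEq K] (h2 : (2 : K) ≠ 0) (hr : r ^ 2 = -3)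
    (hr0 : r ≠ 0) (hσ : Function.Involutive σ) (hσr : σ r = r) (c : K) :
    #{y | 8 * y * σ y + 4 * y ^ 2 - c = 0} ≤ 2 := by
  calc #{y | 8 * y * σ y + 4 * y ^ 2 - c = 0}
      ≤ #(nthRootsFinset 2 (((r - 1) * c - (r + 1) * σ c) / 2)) := by
        refine card_le_card_of_injOn (twist σ r) (fun y hy => ?_)
          (twist_injective h2 hr0 hσ hσr).injOn
        rw [mem_coe, mem_filter, sub_eq_zero] at hy
        rw [mem_coe, mem_nthRootsFinset two_pos, eq_div_iff h2, mul_comm]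
        exact two_mul_twist_sq hσ hr hy.2
    _ ≤ 2 := by
        rw [nthRootsFinset_def]
        exact (Multiset.toFinset_card_le _).trans (card_nthRoots 2 _)

end Twist

lemma iterateFrobenius_involutive {F : Type*} [Field F] [Fintype F] {p m : ℕ} [ExpChar F p]
    (hF : Fintype.card F = (p ^ m) ^ 2) : Function.Involutive (iterateFrobenius F p m) := by
  intro x
  simp only [iterateFrobenius_def]
  rw [← pow_mul, ← sq, ← hF, FiniteField.pow_card]

lemma exists_primitive_cube_root_pow_eq_self {F : Type*} [Field F] [Fintype F] {q : ℕ}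
    (hF : Fintype.card F = q ^ 2) (hq : q % 3 = 1) : ∃ ω : F, ω ^ 2 + ω + 1 = 0 ∧ ω ^ q = ω := by
  classical
  have h3 : 3 ∣ Fintype.card Fˣ := by
    rw [Fintype.card_units, hF]
    exact Nat.dvd_of_mod_eq_zero (Nat.sub_mod_eq_zero_of_mod_eq (by rw [Nat.pow_mod, hq]))
  have : Fact (Nat.Prime 3) := ⟨Nat.prime_three⟩
  obtain ⟨ζ, hζ⟩ := exists_prime_orderOf_dvd_card 3 h3
  have hprim : IsPrimitiveRoot (ζ : F) 3 :=
    IsPrimitiveRoot.coe_units_iff.mpr (hζ ▸ IsPrimitiveRoot.orderOf ζ :)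
  refine ⟨ζ, ?_, ?_⟩
  · have h := hprim.geom_sum_eq_zero (by norm_num)
    simp only [sum_range_succ, range_zero, sum_empty, pow_zero, pow_one] at h
    linear_combination h
  · rw [← Units.val_pow_eq_pow_val, ← pow_mod_orderOf, hζ, hq, pow_one]

theorem stmt13_general (p : ℕ) (hp : p.Prime) (hp3 : 3 < p) (m : ℕ) (n : ℕ)
    (hn : n = 2 * m) (hmod : p ^ m % 3 = 1)
    (F : Type*) [Field F] [Fintype F] [DecidableEq F]
    (hF : Fintype.card F = p ^ n) :
    ∀ c : F,
      (Finset.univ.filter (fun y : F => 8 * y * y ^ p ^ m + 4 * y ^ 2 - c = 0)).card ≠ 4 := by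
  have : Fact p.Prime := ⟨hp⟩
  have := charP_of_card_eq_prime_pow (R := F) hF
  have hF' : Fintype.card F = (p ^ m) ^ 2 := by rw [hF, hn, ← pow_mul, mul_comm]
  have h2 : (2 : F) ≠ 0 := by
    exact_mod_cast CharP.cast_ne_zero_of_ne_of_prime F Nat.prime_two (by omega)
  have h3 : (3 : F) ≠ 0 := by
    exact_mod_cast CharP.cast_ne_zero_of_ne_of_prime F Nat.prime_three (by omega)
  obtain ⟨ω, hω, hωσ⟩ := exists_primitive_cube_root_pow_eq_self hF' hmod
  have hr : (2 * ω + 1) ^ 2 = -3 := by linear_combination 4 * hω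
  have hr0 : 2 * ω + 1 ≠ 0 := fun h => h3 (by linear_combination hr - (2 * ω + 1) * h)
  have hσr : iterateFrobenius F p m (2 * ω + 1) = 2 * ω + 1 := by
    simp only [map_add, map_mul, map_ofNat, map_one, iterateFrobenius_def, hωσ]
  intro c
  exact ((card_solutions_le_two h2 hr hr0 (iterateFrobenius_involutive hF') hσr c).trans_lt
    (by norm_num)).ne

/-- Let `p > 3` be prime, `n = 2m`, `p^m ≡ 1 (mod 3)`. For every `c` in `F_{p^n}`,
the equation `8·y·y^(p^m) + 4·y² - c = 0` does not have exactly four solutions `y`. -/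
theorem stmt13 (p : ℕ) (hp : p.Prime) (hp3 : 3 < p) (m : ℕ) (hm : 0 < m) (n : ℕ)
    (hn : n = 2 * m) (hmod : p ^ m % 3 = 1)
    (F : Type*) [Field F] [Fintype F] [DecidableEq F]
    (hF : Fintype.card F = p ^ n) :
    ∀ c : F,
      (Finset.univ.filter (fun y : F => 8 * y * y ^ p ^ m + 4 * y ^ 2 - c = 0)).card ≠ 4 :=
  stmt13_general p hp hp3 m n hn hmod F hF
end

section
/- Let p > 3 be a prime, m a positive integer, and n = 2m, and suppose p^m ≡ 2 (mod 3). For every nonzero c ∈ F_{p^n} such that c̄^2 - c̄·c + c^2 = 0 (where c̄ = c^{p^m}), the element -2c̄ + c is a square in F_{p^n}. -/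
/-!
Write `q = p ^ m`, so that `x ↦ x ^ q` is the involutive Frobenius of `F = 𝔽_{q²}`, and put
`c̄ = c ^ q`, `z = c - 2c̄`. The relation `c̄² - c̄c + c² = 0` gives `z̄ c = -z c̄` and
`c̄³ = -c³`, i.e. `z ^ (q - 1) = -c ^ (q - 1)` and `c ^ (3(q - 1)) = -1`. As `q ≡ 5 (mod 6)`,
Euler's exponent is `(q² - 1)/2 = (q - 1) · 3b` with `q + 1 = 6b`, so
`z ^ ((q² - 1)/2) = (-1) ^ (3b) · (-1) ^ b = 1`.
-/

theorem map_neg_two_mul_add_mul_eq_neg {R : Type*} [CommRing R] (σ : R →+* R) {c : R}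
    (hc : σ (σ c) = c) (h : σ c ^ 2 - σ c * c + c ^ 2 = 0) :
    σ (-2 * σ c + c) * c = -((-2 * σ c + c) * σ c) := by
  rw [map_add, map_mul, map_neg, map_ofNat, hc]
  linear_combination (-2) * h

section FiniteField

variable {F : Type*} [Field F] [Fintype F] {q : ℕ}

theorem exists_ringHom_eq_pow_of_card_eq_sq (hq : Fintype.card F = q ^ 2) :
    ∃ σ : F →+* F, ∀ x, σ x = x ^ q := by
  obtain ⟨n, hp, hcard⟩ := FiniteField.card F (ringChar F)
  have : Fact (ringChar F).Prime := ⟨hp⟩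
  obtain ⟨k, -, rfl⟩ := (Nat.dvd_prime_pow hp).mp (hcard ▸ hq ▸ dvd_pow_self q two_ne_zero)
  exact ⟨iterateFrobenius F (ringChar F) k, fun _ => rfl⟩

theorem pow_pow_of_card_eq_sq (hq : Fintype.card F = q ^ 2) (x : F) : (x ^ q) ^ q = x := by
  rw [← pow_mul, ← sq, ← hq, FiniteField.pow_card]

theorem isSquare_of_pow_sub_one_eq_neg (hq : Fintype.card F = q ^ 2) (h2 : ringChar F ≠ 2)
    {b : ℕ} (hb : q + 1 = 6 * b) {z c : F} (hz : z ≠ 0) (hzc : z ^ (q - 1) = -c ^ (q - 1))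
    (hc : c ^ (3 * (q - 1)) = -1) : IsSquare z := by
  have hexp : q ^ 2 / 2 = (q - 1) * (3 * b) := by
    obtain ⟨b, rfl⟩ : ∃ b', b = b' + 1 := ⟨b - 1, by omega⟩
    obtain rfl : q = 6 * b + 5 := by omega
    rw [show 6 * b + 5 - 1 = 6 * b + 4 by omega,
      show (6 * b + 5) ^ 2 = 2 * ((6 * b + 4) * (3 * (b + 1))) + 1 by ring]
    omega
  rw [FiniteField.isSquare_iff h2 hz, hq, hexp]
  calc z ^ ((q - 1) * (3 * b)) = (-1) ^ (3 * b) * (c ^ (3 * (q - 1))) ^ b := by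
        rw [pow_mul, hzc, neg_pow, ← pow_mul, ← pow_mul]
        ring
    _ = 1 := by rw [hc, ← pow_add]; exact Even.neg_one_pow ⟨2 * b, by ring⟩

theorem isSquare_neg_two_mul_pow_add (hq : Fintype.card F = q ^ 2) (hq3 : q % 3 = 2) {c : F}
    (hc : c ≠ 0) (h : (c ^ q) ^ 2 - c ^ q * c + c ^ 2 = 0) : IsSquare (-2 * c ^ q + c) := by
  set z := -2 * c ^ q + c
  rcases eq_or_ne z 0 with hz | hz
  · rw [hz]
    exact IsSquare.zero
  by_cases h2 : ringChar F = 2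
  · exact FiniteField.isSquare_of_char_two h2 z
  have hq0 : q ≠ 0 := by omega
  have hq_odd : Odd q := (Nat.odd_pow_iff two_ne_zero).mp <|
    Nat.odd_iff.mpr (hq ▸ FiniteField.odd_card_of_char_ne_two h2)
  obtain ⟨σ, hσ⟩ := exists_ringHom_eq_pow_of_card_eq_sq hq
  have hconj : z ^ q * c = -(z * c ^ q) := by
    simpa only [hσ] using map_neg_two_mul_add_mul_eq_neg σ
      (by rw [hσ, hσ, pow_pow_of_card_eq_sq hq]) (by rwa [hσ])
  have hzc : z ^ (q - 1) = -c ^ (q - 1) := by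
    refine mul_right_cancel₀ (mul_ne_zero hz hc) ?_
    calc z ^ (q - 1) * (z * c) = z ^ q * c := by rw [← pow_sub_one_mul hq0 z]; ring
      _ = -(z * c ^ q) := hconj
      _ = -c ^ (q - 1) * (z * c) := by rw [← pow_sub_one_mul hq0 c]; ring
  have hc3 : c ^ (3 * (q - 1)) = -1 := by
    refine mul_right_cancel₀ (pow_ne_zero 3 hc) ?_
    calc c ^ (3 * (q - 1)) * c ^ 3 = (c ^ q) ^ 3 := by rw [← pow_sub_one_mul hq0 c]; ring
      _ = -1 * c ^ 3 := by linear_combination (c ^ q + c) * h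
  exact isSquare_of_pow_sub_one_eq_neg hq h2 (b := (q + 1) / 6)
    (by have := Nat.odd_iff.mp hq_odd; omega) hz hzc hc3

end FiniteField

theorem stmt14_general (p : ℕ) (m : ℕ) (n : ℕ)
    (hn : n = 2 * m) (hmod : p ^ m % 3 = 2)
    (F : Type*) [Field F] [Fintype F]
    (hF : Fintype.card F = p ^ n) :
    ∀ c : F, c ≠ 0 → (c ^ p ^ m) ^ 2 - c ^ p ^ m * c + c ^ 2 = 0 →
      ∃ y : F, y ^ 2 = -2 * c ^ p ^ m + c := by
  intro c hc h
  have hcard : Fintype.card F = (p ^ m) ^ 2 := by rw [hF, hn, ← pow_mul, mul_comm]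
  obtain ⟨y, hy⟩ := isSquare_neg_two_mul_pow_add hcard hmod hc h
  exact ⟨y, by rw [hy, sq]⟩

/-- Let `p > 3` be prime, `n = 2m`, `p^m ≡ 2 (mod 3)`. For every nonzero `c` in `F_{p^n}`
with `c̄² - c̄·c + c² = 0` (where `c̄ = c^(p^m)`), the element `-2c̄ + c` is a square
in `F_{p^n}`. -/
theorem stmt14 (p : ℕ) (hp : p.Prime) (hp3 : 3 < p) (m : ℕ) (hm : 0 < m) (n : ℕ)
    (hn : n = 2 * m) (hmod : p ^ m % 3 = 2)
    (F : Type*) [Field F] [Fintype F]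
    (hF : Fintype.card F = p ^ n) :
    ∀ c : F, c ≠ 0 → (c ^ p ^ m) ^ 2 - c ^ p ^ m * c + c ^ 2 = 0 →
      ∃ y : F, y ^ 2 = -2 * c ^ p ^ m + c :=
  stmt14_general p m n hn hmod F hF
end

section
/- Let p > 3 be a prime, m a positive integer, and n = 2m, and suppose p^m ≡ 1 (mod 3). Then the power mapping F(x) = x^{p^m+2} over F_{p^n} is differentially 2-uniform (i.e., max over b of δ(b) equals 2), and its differential spectrum is given by ω_0 = (p^n - 1)/2, ω_1 = 1, ω_2 = (p^n - 1)/2, and ω_i = 0 for all i > 2. -/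
open Finset

section ConjDerivative

variable {F : Type*} [Field F] (φ : F →+* F)

def conjDerivative (x : F) : F := (φ x + 1) * (x + 1) ^ 2 - φ x * x ^ 2

def conjDerivativeRoot (e x : F) : F := (1 + e) * x + (e - 1) * φ x + e

variable {φ}

lemma pow_add_two_sub_pow_add_two {q : ℕ} (hφ : ∀ x, φ x = x ^ q) (x : F) :
    (x + 1) ^ (q + 2) - x ^ (q + 2) = conjDerivative φ x := by
  rw [conjDerivative, pow_add, pow_add, ← hφ, ← hφ, map_add, map_one]

variable (φ) in
lemma conjDerivative_neg_one_sub (x : F) : conjDerivative φ (-1 - x) = conjDerivative φ x := by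
  simp only [conjDerivative, map_sub, map_neg, map_one]
  ring

variable (φ) in
lemma conjDerivativeRoot_neg_one_sub (e x : F) :
    conjDerivativeRoot φ e (-1 - x) = -conjDerivativeRoot φ e x := by
  simp only [conjDerivativeRoot, map_sub, map_neg, map_one]
  ring

lemma sq_conjDerivativeRoot (hφφ : ∀ x, φ (φ x) = x) {e : F} (he : e ^ 2 = -3) (x : F) :
    conjDerivativeRoot φ e x ^ 2 =
      1 + 2 * (e - 1) * conjDerivative φ x - 2 * (e + 1) * φ (conjDerivative φ x) := by
  simp only [conjDerivativeRoot, conjDerivative, map_sub, map_add, map_mul, map_pow, map_one,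
    hφφ]
  linear_combination (x + φ x + 1) ^ 2 * he

lemma conjDerivativeRoot_injective (hφφ : ∀ x, φ (φ x) = x) {e : F} (he : e ^ 2 = -3)
    (heφ : φ e = e) (h2 : (2 : F) ≠ 0) (h3 : (3 : F) ≠ 0) :
    Function.Injective (conjDerivativeRoot φ e) := by
  intro x y hxy
  have he0 : e ≠ 0 := by
    rintro rfl
    exact h3 (by linear_combination he)
  have h : (1 + e) * (x - y) + (e - 1) * φ (x - y) = 0 := by
    simp only [conjDerivativeRoot] at hxy
    rw [map_sub]
    linear_combination hxy
  have hφ : (1 + e) * φ (x - y) + (e - 1) * (x - y) = 0 := by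
    simpa only [map_add, map_mul, map_sub, map_one, heφ, hφφ, map_zero] using congrArg φ h
  -- the system in `(x - y, φ (x - y))` has determinant `(1 + e) ^ 2 - (e - 1) ^ 2 = 4 e`
  have : (2 * 2 * e) * (x - y) = 0 := by linear_combination (1 + e) * h - (e - 1) * hφ
  simpa [h2, he0, sub_eq_zero] using this

lemma eq_or_eq_neg_one_sub_of_conjDerivative_eq (hφφ : ∀ x, φ (φ x) = x) {e : F}
    (he : e ^ 2 = -3) (heφ : φ e = e) (h2 : (2 : F) ≠ 0) (h3 : (3 : F) ≠ 0) {x y : F}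
    (h : conjDerivative φ x = conjDerivative φ y) : y = x ∨ y = -1 - x := by
  have hinj := conjDerivativeRoot_injective hφφ he heφ h2 h3
  have hsq : conjDerivativeRoot φ e y ^ 2 = conjDerivativeRoot φ e x ^ 2 := by
    rw [sq_conjDerivativeRoot hφφ he, sq_conjDerivativeRoot hφφ he, h]
  rcases sq_eq_sq_iff_eq_or_eq_neg.mp hsq with h' | h'
  · exact Or.inl (hinj h')
  · rw [← conjDerivativeRoot_neg_one_sub] at h'
    exact Or.inr (hinj h')

end ConjDerivative

section Fibers

variable {α β : Type*} [Fintype α] [DecidableEq β] {f : α → β} {σ : α → α}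

lemma card_filter_apply_eq_le_two [DecidableEq α] (hf : ∀ x y, f x = f y → y = x ∨ y = σ x)
    (b : β) : #{x | f x = b} ≤ 2 := by
  obtain h | ⟨x, hx⟩ := (filter (fun x => f x = b) univ).eq_empty_or_nonempty
  · simp [h]
  · refine (card_le_card fun y hy => ?_).trans (card_le_two (a := x) (b := σ x))
    rw [mem_filter] at hx hy
    simpa using hf x y (hx.2.trans hy.2.symm)

lemma card_filter_apply_eq_eq_one_iff (hσ : ∀ x, f (σ x) = f x)
    (hf : ∀ x y, f x = f y → y = x ∨ y = σ x) {x₀ : α} (hfix : ∀ x, σ x = x ↔ x = x₀)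
    (b : β) : #{x | f x = b} = 1 ↔ b = f x₀ := by
  constructor
  · intro hb
    obtain ⟨x, hx⟩ := card_eq_one.mp hb
    have hxb : f x = b := by
      simpa using (hx ▸ mem_singleton_self x : x ∈ ({x | f x = b} : Finset α))
    have hσx : σ x ∈ ({x | f x = b} : Finset α) := by simp [hσ, hxb]
    rw [hx, mem_singleton, hfix] at hσx
    rw [← hxb, hσx]
  · rintro rfl
    refine card_eq_one.mpr ⟨x₀, eq_singleton_iff_unique_mem.mpr ⟨by simp, fun y hy => ?_⟩⟩
    rcases hf x₀ y (mem_filter.mp hy).2.symm with h | h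
    · exact h
    · rwa [(hfix x₀).mpr rfl] at h

end Fibers

section BoundedCounts

variable {β : Type*} [Fintype β] {g : β → ℕ}

lemma sum_eq_card_filter_eq_one_add_two_mul (hg : ∀ b, g b ≤ 2) :
    ∑ b, g b = #{b | g b = 1} + 2 * #{b | g b = 2} := by
  rw [← sum_fiberwise_of_maps_to (g := g) (t := range 3)
    fun b _ => mem_range.mpr (Nat.lt_succ_of_le (hg b))]
  simp only [sum_range_succ, sum_range_zero, zero_add]
  rw [sum_const_nat (m := 0) (fun b hb => (mem_filter.mp hb).2),
    sum_const_nat (m := 1) (fun b hb => (mem_filter.mp hb).2),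
    sum_const_nat (m := 2) (fun b hb => (mem_filter.mp hb).2)]
  ring

lemma card_eq_card_filter_eq_zero_add_one_add_two (hg : ∀ b, g b ≤ 2) :
    Fintype.card β = #{b | g b = 0} + #{b | g b = 1} + #{b | g b = 2} := by
  rw [← card_univ, card_eq_sum_card_fiberwise (f := g) (t := range 3)
    fun b _ => mem_range.mpr (Nat.lt_succ_of_le (hg b))]
  simp [sum_range_succ]

end BoundedCounts

lemma differential_spectrum_of_fibers {F : Type*} [Field F] [Fintype F] [DecidableEq F] {d : ℕ}
    (h2 : (2 : F) ≠ 0)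
    (hsymm : ∀ x : F, (-1 - x + 1) ^ d - (-1 - x) ^ d = (x + 1) ^ d - x ^ d)
    (hfib : ∀ x y : F, (x + 1) ^ d - x ^ d = (y + 1) ^ d - y ^ d → y = x ∨ y = -1 - x) :
    univ.sup (deltaF F d) = 2 ∧
    omegaF F d 0 = (Fintype.card F - 1) / 2 ∧
    omegaF F d 1 = 1 ∧
    omegaF F d 2 = (Fintype.card F - 1) / 2 ∧
    ∀ i, 2 < i → omegaF F d i = 0 := by
  have hle : ∀ b, deltaF F d b ≤ 2 := card_filter_apply_eq_le_two hfib
  have hfix : ∀ x : F, -1 - x = x ↔ x = -2⁻¹ := fun x => by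
    constructor <;> intro h <;> field_simp at h ⊢ <;> linear_combination -h
  have hω1 : omegaF F d 1 = 1 := by
    simp only [omegaF, deltaF, card_filter_apply_eq_eq_one_iff hsymm hfib hfix, filter_eq',
      mem_univ, if_true, card_singleton]
  have hsum : Fintype.card F = omegaF F d 1 + 2 * omegaF F d 2 := by
    rw [omegaF, omegaF, ← sum_eq_card_filter_eq_one_add_two_mul hle, ← card_univ,
      card_eq_sum_card_fiberwise (f := fun x : F => (x + 1) ^ d - x ^ d) (t := univ)
        fun _ _ => mem_univ _]
    rfl
  have hcard : Fintype.card F = omegaF F d 0 + omegaF F d 1 + omegaF F d 2 :=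
    card_eq_card_filter_eq_zero_add_one_add_two hle
  have hone : 1 < Fintype.card F := Fintype.one_lt_card
  refine ⟨le_antisymm (Finset.sup_le fun b _ => hle b) ?_, by omega, hω1, by omega,
    fun i hi => ?_⟩
  · obtain ⟨b, hb⟩ := card_pos.mp (show 0 < omegaF F d 2 by omega)
    exact (mem_filter.mp hb).2 ▸ le_sup (mem_univ b)
  · exact card_eq_zero.mpr (filter_eq_empty_iff.mpr fun b _ => by have := hle b; omega)

lemma exists_sq_eq_neg_three_fixed {F : Type*} [Field F] [Fintype F] {φ : F →+* F} {q : ℕ}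
    (hφ : ∀ x, φ x = x ^ q) (hF : Fintype.card F % 3 = 1) (hq : q % 3 = 1) :
    ∃ e : F, e ^ 2 = -3 ∧ φ e = e := by
  classical
  have : Fact (Nat.Prime 3) := ⟨Nat.prime_three⟩
  obtain ⟨ζ, hζ⟩ := exists_prime_orderOf_dvd_card 3 (G := Fˣ) (by rw [Fintype.card_units]; omega)
  rw [← orderOf_units] at hζ
  have hζ3 : (ζ : F) ^ 3 = 1 := hζ ▸ pow_orderOf_eq_one _
  have hζ1 : (ζ : F) ≠ 1 := fun h => by simp [h] at hζ
  have hζ2 : (ζ : F) ^ 2 + ζ + 1 = 0 := by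
    have : ((ζ : F) - 1) * ((ζ : F) ^ 2 + ζ + 1) = 0 := by linear_combination hζ3
    exact (mul_eq_zero.mp this).resolve_left (sub_ne_zero.mpr hζ1)
  refine ⟨2 * ζ + 1, by linear_combination 4 * hζ2, ?_⟩
  have hζq : (ζ : F) ^ q = ζ := by rw [← pow_mod_orderOf, hζ, hq, pow_one]
  rw [map_add, map_mul, map_ofNat, map_one, hφ, hζq]

theorem stmt16_general (p : ℕ) (hp : p.Prime) (hp3 : 3 < p) (m : ℕ) (n : ℕ)
    (hn : n = 2 * m) (hmod : p ^ m % 3 = 1)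
    (F : Type*) [Field F] [Fintype F] [DecidableEq F]
    (hF : Fintype.card F = p ^ n) :
    (Finset.univ.sup (fun b : F => deltaF F (p ^ m + 2) b) = 2) ∧
    omegaF F (p ^ m + 2) 0 = (p ^ n - 1) / 2 ∧
    omegaF F (p ^ m + 2) 1 = 1 ∧
    omegaF F (p ^ m + 2) 2 = (p ^ n - 1) / 2 ∧
    (∀ i, 2 < i → omegaF F (p ^ m + 2) i = 0) := by
  have : Fact p.Prime := ⟨hp⟩
  have : CharP F p := charP_of_card_eq_prime_pow hF
  have h2 : (2 : F) ≠ 0 := by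
    exact_mod_cast (CharP.cast_eq_zero_iff F p 2).not.mpr
      (Nat.not_dvd_of_pos_of_lt two_pos (by omega))
  have h3 : (3 : F) ≠ 0 := by
    exact_mod_cast (CharP.cast_eq_zero_iff F p 3).not.mpr (Nat.not_dvd_of_pos_of_lt three_pos hp3)
  let φ := iterateFrobenius F p m
  have hφ : ∀ x, φ x = x ^ p ^ m := iterateFrobenius_def p m
  have hφφ : ∀ x, φ (φ x) = x := fun x => by
    rw [hφ, hφ, ← pow_mul, ← pow_add, ← two_mul, ← hn, ← hF, FiniteField.pow_card]
  obtain ⟨e, he, heφ⟩ := exists_sq_eq_neg_three_fixed hφ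
    (by rw [hF, hn, pow_mul', Nat.pow_mod, hmod]) hmod
  rw [← hF]
  refine differential_spectrum_of_fibers h2 (fun x => ?_) (fun x y h => ?_)
  · simp only [pow_add_two_sub_pow_add_two hφ, conjDerivative_neg_one_sub]
  · simp only [pow_add_two_sub_pow_add_two hφ] at h
    exact eq_or_eq_neg_one_sub_of_conjDerivative_eq hφφ he heφ h2 h3 h

/-- Let `p > 3` be prime, `n = 2m`, `p^m ≡ 1 (mod 3)`. Then `x^(p^m+2)` over `F_{p^n}` is
differentially 2-uniform and its differential spectrum is
`ω₀ = (p^n - 1)/2`, `ω₁ = 1`, `ω₂ = (p^n - 1)/2`, `ωᵢ = 0` for `i > 2`. -/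
theorem stmt16 (p : ℕ) (hp : p.Prime) (hp3 : 3 < p) (m : ℕ) (hm : 0 < m) (n : ℕ)
    (hn : n = 2 * m) (hmod : p ^ m % 3 = 1)
    (F : Type*) [Field F] [Fintype F] [DecidableEq F]
    (hF : Fintype.card F = p ^ n) :
    (Finset.univ.sup (fun b : F => deltaF F (p ^ m + 2) b) = 2) ∧
    omegaF F (p ^ m + 2) 0 = (p ^ n - 1) / 2 ∧
    omegaF F (p ^ m + 2) 1 = 1 ∧
    omegaF F (p ^ m + 2) 2 = (p ^ n - 1) / 2 ∧
    (∀ i, 2 < i → omegaF F (p ^ m + 2) i = 0) :=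
  stmt16_general p hp hp3 m n hn hmod F hF
end

section
/- Let p > 3 be a prime, m a positive integer, and n = 2m, and suppose p^m ≡ 2 (mod 3). Then the power mapping F(x) = x^{p^m+2} over F_{p^n} is differentially 4-uniform (i.e., max over b of δ(b) equals 4), and its differential spectrum is given by ω_0 = (3p^m + 1)(p^m - 1)/4, ω_1 = 1, ω_2 = p^m - 1, ω_3 = 0, ω_4 = (p^m - 1)^2/4, and ω_i = 0 for all i > 4. -/
open Polynomial Finset

section Aux

lemma even_card_of_invol {α : Type*} (s : Finset α) (g : α → α)
    (hmem : ∀ a ∈ s, g a ∈ s) (hinv : ∀ a ∈ s, g (g a) = a) (hne : ∀ a ∈ s, g a ≠ a) :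
    Even s.card := by
  have h : ∏ _x ∈ s, (-1 : ℤ) = 1 :=
    Finset.prod_involution (fun a _ => g a) (fun a _ => by norm_num)
      (fun a ha _ => hne a ha) (fun a ha => hmem a ha) (fun a ha => hinv a ha)
  rw [Finset.prod_const] at h
  rwa [neg_one_pow_eq_one_iff_even (by norm_num : (-1:ℤ) ≠ 1)] at h

variable {F : Type*} [Field F] [Fintype F] [DecidableEq F]

/-- Count of solutions of `x^q = ω•x` when `ω^(q+1) = 1`, `q = p^m` the square root of `|F|`. -/
lemma twisted_count (p : ℕ) (hp : p.Prime) [CharP F p] (m : ℕ) (hq2 : 2 ≤ p ^ m)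
    (hcard : Fintype.card F = (p ^ m) ^ 2) (ω : F) (hω : ω ^ (p ^ m + 1) = 1) :
    (univ.filter fun x : F => x ^ p ^ m = ω * x).card = p ^ m := by
  haveI : Fact p.Prime := ⟨hp⟩
  set q := p ^ m with hq
  have hq1 : 1 ≤ q := Nat.one_le_iff_ne_zero.mpr (pow_ne_zero m hp.pos.ne')
  set f : F[X] := X ^ q - C ω * X with hf
  set g : F[X] := f ^ (q - 1) + C (ω ^ q) with hg
  have hfq : f ^ q = X ^ (q * q) - C (ω ^ q) * X ^ q := by
    rw [hf, hq, sub_pow_char_pow, mul_pow, ← C_pow, ← pow_mul]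
  have key : f * g = X ^ (q * q) - X := by
    have h1 : f * f ^ (q - 1) = f ^ q := by
      rw [← pow_succ', Nat.sub_add_cancel hq1]
    rw [hg, mul_add, h1, hfq]
    have h2 : C (ω ^ q) * f = C (ω ^ q) * X ^ q - C (ω ^ (q + 1)) * X := by
      rw [hf, pow_succ, C_mul]; ring
    rw [mul_comm f (C (ω ^ q)), h2, hω, C_1, one_mul]; ring
  have hne : f * g ≠ 0 := by
    rw [key]
    exact FiniteField.X_pow_card_sub_X_ne_zero F (by nlinarith [hq2])
  have hfne : f ≠ 0 := left_ne_zero_of_mul hne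
  have hroots : f.roots + g.roots = (univ : Finset F).val := by
    rw [← roots_mul hne, key]
    have h3 : q * q = Fintype.card F := by rw [hcard]; ring
    rw [h3, FiniteField.roots_X_pow_card_sub_X]
  have hnodup : f.roots.Nodup := by
    have hle : f.roots ≤ f.roots + g.roots := Multiset.le_add_right _ _
    rw [hroots] at hle
    exact Multiset.nodup_of_le hle univ.nodup
  have hdf : f.natDegree ≤ q := by
    rw [hf]
    refine le_trans (natDegree_sub_le _ _) ?_
    simp only [natDegree_X_pow, max_le_iff, le_refl, true_and]
    exact le_trans (natDegree_mul_le.trans (by simp)) hq1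
  have hdg : g.natDegree ≤ (q - 1) * q := by
    rw [hg]
    refine le_trans (natDegree_add_le _ _) ?_
    simp only [natDegree_C, max_le_iff, Nat.zero_le, and_true]
    exact le_trans (natDegree_pow_le) (Nat.mul_le_mul_left _ hdf)
  have hcount : Multiset.card f.roots = q := by
    have h1 : Multiset.card f.roots ≤ q := le_trans (card_roots' f) hdf
    have h2 : Multiset.card f.roots + Multiset.card g.roots = q * q := by
      rw [← Multiset.card_add, hroots]
      show (univ : Finset F).card = q * q
      rw [card_univ, hcard]; ring
    have h3 : Multiset.card g.roots ≤ (q - 1) * q := le_trans (card_roots' g) hdg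
    have h4 : (q - 1) * q + q = q * q := by
      rw [Nat.sub_one_mul]
      have : q ≤ q * q := Nat.le_mul_of_pos_left q hq1
      omega
    omega
  have hseteq : (univ.filter fun x : F => x ^ q = ω * x) = f.roots.toFinset := by
    ext x
    simp only [mem_filter, mem_univ, true_and, Multiset.mem_toFinset]
    rw [mem_roots hfne]
    simp only [hf, IsRoot.def, eval_sub, eval_mul, eval_pow, eval_X, eval_C, sub_eq_zero]
  rw [hseteq, Multiset.toFinset_card_of_nodup hnodup, hcount]

lemma fiber_card_eq_ker (φ : F → F) (hadd : ∀ x y : F, φ (x + y) = φ x + φ y) (c : F)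
    (x₀ : F) (hx₀ : φ x₀ = c) :
    (univ.filter fun x : F => φ x = c).card = (univ.filter fun x : F => φ x = 0).card := by
  have h0 : φ 0 = 0 := by
    have := hadd 0 0
    rw [add_zero] at this
    exact left_eq_add.mp this
  have hsub : ∀ x y : F, φ (x - y) = φ x - φ y := by
    intro x y
    have := hadd (x - y) y
    rw [sub_add_cancel] at this
    exact eq_sub_of_add_eq this.symm
  symm
  refine Finset.card_bij' (fun x _ => x + x₀) (fun x _ => x - x₀) ?_ ?_ ?_ ?_
  · intro a ha
    simp only [mem_filter, mem_univ, true_and] at ha ⊢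
    rw [hadd, ha, hx₀, zero_add]
  · intro a ha
    simp only [mem_filter, mem_univ, true_and] at ha ⊢
    rw [hsub, ha, hx₀, sub_self]
  · intro a _; ring
  · intro a _; ring

end Aux

section Main

variable {F : Type*} [Field F] [Fintype F] [DecidableEq F] {q : ℕ}

lemma frob_sub (hfrob : ∀ x y : F, (x + y) ^ q = x ^ q + y ^ q) :
    ∀ x y : F, (x - y) ^ q = x ^ q - y ^ q := by
  intro x y
  have := hfrob (x - y) y
  rw [sub_add_cancel] at this
  exact eq_sub_of_add_eq this.symm

lemma frob_two (hfrob : ∀ x y : F, (x + y) ^ q = x ^ q + y ^ q) : (2 : F) ^ q = 2 := by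
  have := hfrob 1 1
  norm_num at this
  convert this using 2 <;> norm_num

lemma E_half (hq0 : q ≠ 0) (h2 : (2:F) ≠ 0) :
    (-2⁻¹ : F) ^ q * (2 * (-2⁻¹) + 1) + (-2⁻¹ + 1) ^ 2 = (4 : F)⁻¹ := by
  have hz : (2:F) * (-2⁻¹) + 1 = 0 := by field_simp; ring
  rw [hz, mul_zero, zero_add]
  have h4 : (4:F) = 2 * 2 := by norm_num
  rw [h4, mul_inv]
  field_simp
  ring

lemma E_even (hq0 : q ≠ 0) (h2 : (2:F) ≠ 0)
    (hfrob : ∀ x y : F, (x + y) ^ q = x ^ q + y ^ q) (b : F) (hb : b ≠ (4:F)⁻¹) :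
    Even ((univ.filter fun x : F => x ^ q * (2*x+1) + (x+1)^2 = b).card) := by
  have hsub := frob_sub hfrob
  have hnegq : ∀ x : F, (-1 - x) ^ q = -1 - x ^ q := by
    intro x
    have e : (-1 - x : F) = 0 - (1 + x) := by ring
    rw [e, hsub, zero_pow hq0, hfrob, one_pow]
    ring
  apply even_card_of_invol _ (fun x => -1 - x)
  · intro a ha
    simp only [mem_filter, mem_univ, true_and] at ha ⊢
    rw [hnegq a, ← ha]
    ring
  · intro a _; show -1 - (-1 - a) = a; ring
  · intro a ha
    simp only [mem_filter, mem_univ, true_and] at ha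
    intro h
    replace h : -1 - a = a := h
    have h2x : (2:F) * a = 2 * (-2⁻¹) := by
      rw [mul_neg, mul_inv_cancel₀ h2]
      linear_combination -h
    have hx : a = -2⁻¹ := mul_left_cancel₀ h2 h2x
    apply hb
    rw [← ha, hx, E_half hq0 h2]

lemma E_quarter (hq0 : q ≠ 0) (h2 : (2:F) ≠ 0) (h3 : (3:F) ≠ 0)
    (hfrob : ∀ x y : F, (x + y) ^ q = x ^ q + y ^ q) (hqq : ∀ x : F, (x ^ q) ^ q = x) :
    (univ.filter fun x : F => x ^ q * (2*x+1) + (x+1)^2 = (4:F)⁻¹) = {-2⁻¹} := by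
  have hsub := frob_sub hfrob
  have hc2 := frob_two hfrob
  ext x
  simp only [mem_filter, mem_univ, true_and, mem_singleton]
  constructor
  · intro h
    have hu : (x + 2⁻¹) * ((x + 2⁻¹) + 2 * (x ^ q + 2⁻¹)) = 0 := by
      have hinv : ((2:F)⁻¹) ^ q = 2⁻¹ := by rw [inv_pow, hc2]
      have h4 : ((4:F)⁻¹) = 2⁻¹ * 2⁻¹ := by
        rw [← mul_inv]; norm_num
      rw [h4] at h
      field_simp at h ⊢
      linear_combination h
    rcases mul_eq_zero.mp hu with h1 | h1
    · linear_combination h1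
    · -- x + 2⁻¹ + 2(x^q + 2⁻¹) = 0 ; apply Frobenius and combine
      have hinv : ((2:F)⁻¹) ^ q = 2⁻¹ := by rw [inv_pow, hc2]
      have h1q : x ^ q + 2⁻¹ + 2 * (x + 2⁻¹) = 0 := by
        have := congrArg (fun z : F => z ^ q) h1
        rw [zero_pow hq0] at this
        rw [hfrob (x + 2⁻¹) (2 * (x ^ q + 2⁻¹)), hfrob x 2⁻¹, hinv] at this
        rw [mul_pow, hc2, hfrob (x ^ q) 2⁻¹, hqq, hinv] at this
        linear_combination this
      have hxq : x ^ q = x := by linear_combination (h1 - h1q) / 1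
      have h3x : (3:F) * (x + 2⁻¹) = 0 := by
        rw [hxq] at h1
        linear_combination h1
      have := (mul_eq_zero.mp h3x).resolve_left h3
      linear_combination this
  · intro h
    rw [h, E_half hq0 h2]

lemma E_card_le (hq0 : q ≠ 0) (h2 : (2:F) ≠ 0) (h3 : (3:F) ≠ 0)
    (hfrob : ∀ x y : F, (x + y) ^ q = x ^ q + y ^ q) (hqq : ∀ x : F, (x ^ q) ^ q = x)
    (b : F) (hb : b ≠ (4:F)⁻¹) :
    (univ.filter fun x : F => x ^ q * (2*x+1) + (x+1)^2 = b).card ≤ 4 := by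
  have hc2 := frob_two hfrob
  set P : F[X] := C (-3) * X^4 + C (-6) * X^3 + C (2*b - 4*b^q - 4) * X^2
      + C (2*b - 4*b^q - 1) * X + C (b^2 - b^q) with hP
  have hdeg : P.natDegree = 4 := by
    rw [hP]
    compute_degree!
    all_goals exact neg_ne_zero.mpr h3
  have hP0 : P ≠ 0 := fun h => by simp [h] at hdeg
  refine le_trans (Finset.card_le_card ?_) (le_trans (Multiset.toFinset_card_le _)
    (le_trans (card_roots' P) hdeg.le))
  intro x hx
  simp only [mem_filter, mem_univ, true_and] at hx
  rw [Multiset.mem_toFinset, mem_roots hP0]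
  have hx2 : (2:F) * x + 1 ≠ 0 := by
    intro h
    apply hb
    have h2x : (2:F) * x = 2 * (-2⁻¹) := by
      rw [mul_neg, mul_inv_cancel₀ h2]
      linear_combination h
    have hxv : x = -2⁻¹ := mul_left_cancel₀ h2 h2x
    rw [← hx, hxv, E_half hq0 h2]
  have h1 : x ^ q * (2*x+1) + (x+1)^2 = b := hx
  have h2' : x * (2*x^q+1) + (x^q+1)^2 = b ^ q := by
    have := congrArg (fun z : F => z ^ q) h1
    rw [hfrob (x ^ q * (2*x+1)) ((x+1)^2), mul_pow, hqq] at this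
    rw [hfrob (2*x) 1, one_pow, mul_pow, hc2] at this
    rw [← pow_mul, mul_comm 2 q, pow_mul, hfrob x 1, one_pow] at this
    exact this
  rw [IsRoot.def, hP]
  simp only [eval_add, eval_mul, eval_pow, eval_C, eval_X]
  linear_combination ((2*x+1)^2) * h2'
    + (-(2*x*(x^q)) - x^q - 3*x^2 - 4*x - 1 - b) * h1


lemma Mone (hq0 : q ≠ 0) (h2 : (2:F) ≠ 0)
    (hfrob : ∀ x y : F, (x + y) ^ q = x ^ q + y ^ q) (hqq : ∀ x : F, (x ^ q) ^ q = x)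
    (a : F) (hS : a^2 + a * a^q + (a^q)^2 ≠ 0) :
    (univ.filter fun x : F =>
      2*a*x^q + 2*(a + a^q)*x + (2*a*a^q + a^q + a^2 + 2*a) = 0).card = 1 := by
  have hsub := frob_sub hfrob
  have hc2 := frob_two hfrob
  set ψ : F → F := fun x => 2*a*x^q + 2*(a + a^q)*x with hψ
  have hinj : Function.Injective ψ := by
    intro u v huv
    by_contra hne
    have hw0 : u - v ≠ 0 := sub_ne_zero.mpr hne
    have e1 : 2*a*(u-v)^q + 2*(a + a^q)*(u-v) = 0 := by
      rw [hsub]; simp only [hψ] at huv; linear_combination huv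
    have e2 : 2*a^q*(u-v) + 2*(a + a^q)*(u-v)^q = 0 := by
      have h := congrArg (fun z : F => z ^ q) e1
      rw [zero_pow hq0, hfrob (2*a*(u-v)^q) (2*(a+a^q)*(u-v)), mul_pow, mul_pow, hc2, hqq,
        mul_pow, mul_pow, hc2, hfrob a (a^q), hqq] at h
      linear_combination h
    have key : ((2:F) * (a^2 + a*a^q + (a^q)^2)) * (u - v) = 0 := by
      linear_combination (a + a^q) * e1 - a * e2
    rcases mul_eq_zero.mp key with h | h
    · exact hS ((mul_eq_zero.mp h).resolve_left h2)
    · exact hw0 h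
  have hbij : Function.Bijective ψ := Finite.injective_iff_bijective.mp hinj
  obtain ⟨x₀, hx₀⟩ := hbij.2 (-(2*a*a^q + a^q + a^2 + 2*a))
  rw [Finset.card_eq_one]
  refine ⟨x₀, ?_⟩
  ext x
  simp only [mem_filter, mem_univ, true_and, mem_singleton]
  constructor
  · intro hx
    apply hinj
    rw [hx₀]
    simp only [hψ]
    linear_combination hx
  · rintro rfl
    have h := hx₀
    simp only [hψ] at h
    linear_combination h

lemma Mq_count (p : ℕ) (hp : p.Prime) [CharP F p] (m : ℕ) (hq2 : 2 ≤ p ^ m)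
    (hcard : Fintype.card F = (p ^ m) ^ 2) (hoddq : Odd (p ^ m))
    (h2 : (2:F) ≠ 0)
    (hfrob : ∀ x y : F, (x + y) ^ (p^m) = x ^ (p^m) + y ^ (p^m))
    (hqq : ∀ x : F, (x ^ (p^m)) ^ (p^m) = x)
    (a : F) (ha : a ≠ 0) (hS : a^2 + a * a^(p^m) + (a^(p^m))^2 = 0) :
    (univ.filter fun x : F => 2*a*x^(p^m) + 2*(a + a^(p^m))*x
      + (2*a*a^(p^m) + a^(p^m) + a^2 + 2*a) = 0).card = p^m := by
  set q := p ^ m with hqdef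
  have hq0 : q ≠ 0 := by omega
  have hsub := frob_sub hfrob
  have hc2 := frob_two hfrob
  set ζ : F := a ^ q * a⁻¹ with hζ
  have haq : a ^ q = ζ * a := by rw [hζ]; field_simp
  clear_value ζ
  have hz : ζ^2 + ζ + 1 = 0 := by
    have h1 : (ζ^2 + ζ + 1) * a^2 = 0 := by
      have h := hS
      rw [haq] at h
      linear_combination h
    have ha2 : a^2 ≠ 0 := pow_ne_zero 2 ha
    exact (mul_eq_zero.mp h1).resolve_right ha2
  have hz3 : ζ^3 = 1 := by linear_combination (ζ - 1) * hz
  have hz0 : ζ ≠ 0 := by intro h; rw [h] at hz; norm_num at hz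
  have hzq : ζ ^ q = ζ^2 := by
    have h1 : a = ζ^q * (ζ * a) := by
      have h := congrArg (fun z : F => z ^ q) haq
      rw [hqq, mul_pow, haq] at h
      exact h
    have h2' : ζ * ζ^q = 1 := by
      have hf : (ζ * ζ^q - 1) * a = 0 := by linear_combination -h1
      have := (mul_eq_zero.mp hf).resolve_right ha
      linear_combination this
    linear_combination ζ^2 * h2' - ζ^q * hz3
  set z₀ : F := -((2*ζ+1)*a + (ζ+2)) with hz₀
  set φ : F → F := fun x => 2*x^q - 2*ζ^2*x with hφ
  have hiff : ∀ x : F, (2*a*x^q + 2*(a + a^q)*x + (2*a*a^q + a^q + a^2 + 2*a) = 0)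
      ↔ φ x = z₀ := by
    intro x
    rw [haq]
    constructor
    · intro h
      have hkey : a * (2*x^q - 2*ζ^2*x) = a * z₀ := by
        simp only [hz₀]
        linear_combination h - 2*a*x*hz
      simp only [hφ]
      exact mul_left_cancel₀ ha hkey
    · intro h
      simp only [hφ, hz₀] at h
      linear_combination a*h + 2*a*x*hz
  have hadd : ∀ x y : F, φ (x+y) = φ x + φ y := by
    intro x y; simp only [hφ]; rw [hfrob]; ring
  have hzq1 : ζ ^ (q+1) = 1 := by rw [pow_succ, hzq]; linear_combination hz3
  have hz2ω : (ζ^2) ^ (q+1) = 1 := by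
    rw [← pow_mul, mul_comm 2 (q+1), pow_mul, hzq1, one_pow]
  have hnegζω : (-ζ) ^ (q+1) = 1 := by
    have hev : Even (q + 1) := by rcases hoddq with ⟨k, hk⟩; exact ⟨k+1, by omega⟩
    rw [hev.neg_pow, hzq1]
  have hkerφ : (univ.filter fun x : F => φ x = 0).card = q := by
    have e : (univ.filter fun x : F => φ x = 0)
        = (univ.filter fun x : F => x ^ q = ζ^2 * x) := by
      ext x
      simp only [mem_filter, mem_univ, true_and, hφ]
      constructor
      · intro h
        have hk : (2:F) * x^q = 2 * (ζ^2*x) := by linear_combination h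
        exact mul_left_cancel₀ h2 hk
      · intro h; linear_combination 2*h
    rw [e]; exact twisted_count p hp m hq2 hcard (ζ^2) hz2ω
  have hkerψ : (univ.filter fun z : F => z ^ q = (-ζ) * z).card = q :=
    twisted_count p hp m hq2 hcard (-ζ) hnegζω
  have himg : ∀ x : F, (φ x) ^ q = (-ζ) * (φ x) := by
    intro x
    simp only [hφ]
    rw [hsub, mul_pow, mul_pow, hc2, hqq, mul_pow, ← pow_mul, mul_comm 2 q, pow_mul, hzq, hc2]
    linear_combination (-2*x - 2*ζ*x^q) * hz3
  have hfib : ∀ z ∈ univ.image φ, (univ.filter fun x : F => φ x = z).card = q := by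
    intro z hzz
    obtain ⟨x₀, -, hx₀⟩ := mem_image.mp hzz
    rw [fiber_card_eq_ker φ hadd z x₀ hx₀, hkerφ]
  have hsum : Fintype.card F = (univ.image φ).card * q := by
    have h := card_eq_sum_card_fiberwise (s := (univ : Finset F)) (t := univ.image φ)
      (f := φ) (fun x _ => mem_image_of_mem φ (mem_univ x))
    rw [card_univ] at h
    rw [h, Finset.sum_congr rfl hfib, sum_const, smul_eq_mul]
  have himgcard : (univ.image φ).card = q := by
    have hh : (univ.image φ).card * q = q * q := by
      rw [← hsum, hcard]; ring
    exact Nat.eq_of_mul_eq_mul_right (by omega) hh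
  have himgeq : univ.image φ = univ.filter (fun z : F => z ^ q = (-ζ) * z) := by
    apply Finset.eq_of_subset_of_card_le
    · intro z hzz
      obtain ⟨x, -, rfl⟩ := mem_image.mp hzz
      simp only [mem_filter, mem_univ, true_and]
      exact himg x
    · rw [hkerψ, himgcard]
  have hz₀q : z₀ ^ q = (-ζ) * z₀ := by
    have hnum : ((2*ζ+1)*a + (ζ+2)) ^ q = (2*ζ^2+1)*(ζ*a) + (ζ^2+2) := by
      rw [hfrob ((2*ζ+1)*a) (ζ+2), mul_pow, hfrob (2*ζ) 1, one_pow, mul_pow, hc2,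
        hfrob ζ 2, hc2, hzq, haq]
    simp only [hz₀]
    rw [show -((2*ζ+1)*a + (ζ+2)) = (0:F) - ((2*ζ+1)*a + (ζ+2)) from by ring,
      hsub, zero_pow hq0, hnum]
    linear_combination (-2*(ζ*a) - 2) * hz
  have hz₀mem : z₀ ∈ univ.image φ := by
    rw [himgeq]; simp only [mem_filter, mem_univ, true_and]; exact hz₀q
  obtain ⟨x₀, -, hx₀⟩ := mem_image.mp hz₀mem
  have hfinal : (univ.filter fun x : F => 2*a*x^q + 2*(a + a^q)*x
      + (2*a*a^q + a^q + a^2 + 2*a) = 0) = univ.filter fun x : F => φ x = z₀ := by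
    ext x
    simp only [mem_filter, mem_univ, true_and]
    exact hiff x
  rw [hfinal, fiber_card_eq_ker φ hadd z₀ x₀ hx₀, hkerφ]

lemma good_count (p : ℕ) (hp : p.Prime) [CharP F p] (m : ℕ) (hq2 : 2 ≤ p ^ m)
    (hcard : Fintype.card F = (p ^ m) ^ 2) (h3dvd : 3 ∣ p ^ m + 1) (h3 : (3:F) ≠ 0) :
    (univ.filter fun a : F => a ≠ 0 ∧ a^2 + a * a^(p^m) + (a^(p^m))^2 = 0).card
      = 2 * (p ^ m - 1) := by
  haveI : Fact p.Prime := ⟨hp⟩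
  set q := p ^ m with hqdef
  have hq0 : q ≠ 0 := by omega
  have h3card : 3 ∣ Fintype.card Fˣ := by
    rw [Fintype.card_units, hcard]
    obtain ⟨k, hk⟩ := h3dvd
    obtain ⟨j, hj⟩ : ∃ j, q = j + 1 := ⟨q - 1, by omega⟩
    refine ⟨j * k, ?_⟩
    have e1 : (j+1)^2 - 1 = j * (j + 2) := by
      have h1 : (j+1)^2 = j*(j+2) + 1 := by ring
      omega
    rw [hj, e1]
    have e2 : j + 2 = (j + 1) + 1 := by ring
    rw [e2, ← hj, hk]
    ring
  obtain ⟨u, hu⟩ := exists_prime_orderOf_dvd_card (G := Fˣ) 3 h3card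
  set ω : F := (u : F) with hω
  have hω3 : ω ^ 3 = 1 := by
    have h := pow_orderOf_eq_one u
    rw [hu] at h
    have h2 : ((u^3 : Fˣ) : F) = ((1 : Fˣ) : F) := by rw [h]
    rw [hω]
    simpa using h2
  have hω1 : ω ≠ 1 := by
    intro h
    have : u = 1 := Units.ext h
    rw [this, orderOf_one] at hu
    norm_num at hu
  have hωeq : ω^2 + ω + 1 = 0 := by
    have hfac : (ω - 1) * (ω^2 + ω + 1) = 0 := by linear_combination hω3
    exact (mul_eq_zero.mp hfac).resolve_left (sub_ne_zero.mpr hω1)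
  have hωq : ω ^ (q+1) = 1 := by
    obtain ⟨k, hk⟩ := h3dvd
    rw [hk, pow_mul, hω3, one_pow]
  have hω2q : (ω^2) ^ (q+1) = 1 := by
    rw [← pow_mul, mul_comm 2 (q+1), pow_mul, hωq, one_pow]
  set A := univ.filter fun a : F => a ^ q = ω * a with hA'
  set B := univ.filter fun a : F => a ^ q = ω^2 * a with hB'
  have hA : A.card = q := twisted_count p hp m hq2 hcard ω hωq
  have hB : B.card = q := twisted_count p hp m hq2 hcard (ω^2) hω2q
  have hω0 : ω ≠ 0 := by intro h; rw [h] at hωeq; norm_num at hωeq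
  have hωω2 : ω ≠ ω^2 := by
    intro h
    have hfac : ω * (ω - 1) = 0 := by linear_combination -h
    rcases mul_eq_zero.mp hfac with h' | h'
    · exact hω0 h'
    · exact hω1 (by linear_combination h')
  have hAB : A ∩ B = {0} := by
    ext a
    simp only [hA', hB', mem_inter, mem_filter, mem_univ, true_and, mem_singleton]
    constructor
    · rintro ⟨h1, h2⟩
      by_contra ha
      apply hωω2
      have h12 : ω * a = ω^2 * a := by rw [← h1, ← h2]
      exact mul_right_cancel₀ ha h12
    · rintro rfl
      constructor <;> simp [zero_pow hq0]
  have h0A : (0:F) ∈ A := by simp [hA', zero_pow hq0]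
  have hunion : (univ.filter fun a : F => a ≠ 0 ∧ a^2 + a * a^q + (a^q)^2 = 0)
      = (A ∪ B).erase 0 := by
    ext a
    simp only [mem_erase, mem_union, hA', hB', mem_filter, mem_univ, true_and]
    constructor
    · rintro ⟨ha, hS⟩
      refine ⟨ha, ?_⟩
      have hfac : (a^q - ω*a) * (a^q - ω^2*a) = 0 := by
        linear_combination hS - (a*a^q)*hωeq + a^2*hω3
      rcases mul_eq_zero.mp hfac with h | h
      · left; linear_combination h
      · right; linear_combination h
    · rintro ⟨ha, h⟩
      refine ⟨ha, ?_⟩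
      rcases h with h | h
      · linear_combination (a^q + ω*a + a)*h + a^2*hωeq
      · linear_combination (a^q + ω^2*a + a)*h + a^2*hωeq + ω*a^2*hω3
  rw [hunion, card_erase_of_mem (mem_union_left B h0A)]
  have hcardU : (A ∪ B).card = 2*q - 1 := by
    have hh := Finset.card_union_add_card_inter A B
    rw [hA, hB, hAB, Finset.card_singleton] at hh
    omega
  rw [hcardU]
  omega


lemma Dform (hfrob : ∀ x y : F, (x + y) ^ q = x ^ q + y ^ q) (x : F) :
    (x+1)^(q+2) - x^(q+2) = x^q*(2*x+1) + (x+1)^2 := by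
  have h1 : (x+1)^(q+2) = (x+1)^q * (x+1)^2 := pow_add _ q 2
  have h2 : x^(q+2) = x^q * x^2 := pow_add x q 2
  rw [h1, h2, hfrob x 1, one_pow]
  ring

lemma Dadd (hfrob : ∀ x y : F, (x + y) ^ q = x ^ q + y ^ q) (x a : F) :
    ((x+a+1)^(q+2) - (x+a)^(q+2)) - ((x+1)^(q+2) - x^(q+2))
      = 2*a*x^q + 2*(a + a^q)*x + (2*a*a^q + a^q + a^2 + 2*a) := by
  rw [Dform hfrob (x+a), Dform hfrob x, hfrob x a]
  ring

lemma sum_fiber_card (D : F → F) :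
    ∑ b ∈ univ, (univ.filter fun x : F => D x = b).card = Fintype.card F := by
  have h := Finset.card_eq_sum_card_fiberwise (s := (univ : Finset F)) (t := univ)
    (f := D) (fun x _ => mem_univ _)
  rw [card_univ] at h
  exact h.symm

set_option maxHeartbeats 2000000 in
lemma sum_sq_pairs (D : F → F) :
    ∑ b ∈ univ, ((univ.filter fun x : F => D x = b).card)^2
      = ∑ a ∈ univ, (univ.filter fun x : F => D (x+a) = D x).card := by
  have h1 : ∀ b : F, ((univ.filter fun x : F => D x = b).card)^2
      = ((univ ×ˢ univ).filter fun z : F × F => D z.1 = b ∧ D z.2 = b).card := by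
    intro b
    have e : ((univ ×ˢ univ).filter fun z : F × F => D z.1 = b ∧ D z.2 = b)
        = (univ.filter fun x : F => D x = b) ×ˢ (univ.filter fun x : F => D x = b) := by
      ext z
      simp only [mem_filter, mem_product, mem_univ, true_and]
    rw [e, Finset.card_product]
    ring
  have h2 : ∑ b ∈ univ, ((univ ×ˢ univ).filter fun z : F × F => D z.1 = b ∧ D z.2 = b).card
      = ((univ ×ˢ univ).filter fun z : F × F => D z.1 = D z.2).card := by
    have h := Finset.card_eq_sum_card_fiberwise
      (s := (univ ×ˢ univ).filter fun z : F × F => D z.1 = D z.2)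
      (t := univ) (f := fun z => D z.1) (fun x _ => mem_univ _)
    rw [h]
    apply sum_congr rfl
    intro b _
    rw [filter_filter]
    congr 1
    ext z
    simp only [mem_filter, mem_product, mem_univ, true_and]
    constructor
    · rintro ⟨h1b, h2b⟩
      exact ⟨h1b.trans h2b.symm, h1b⟩
    · rintro ⟨h12, h1b⟩
      exact ⟨h1b, by rw [← h12]; exact h1b⟩
  have h3 : ((univ ×ˢ univ).filter fun z : F × F => D z.1 = D z.2).card
      = ∑ a ∈ univ, (univ.filter fun x : F => D (x+a) = D x).card := by
    have hST : ((univ ×ˢ univ).filter fun z : F × F => D z.1 = D z.2).card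
        = ((univ ×ˢ univ).filter fun z : F × F => D (z.2 + z.1) = D z.2).card := by
      refine Finset.card_bij' (fun z _ => (z.1 - z.2, z.2)) (fun z _ => (z.2 + z.1, z.2))
        (fun z hz => ?_) (fun z hz => ?_) (fun z hz => ?_) (fun z hz => ?_)
      · simp only [mem_filter, mem_product, mem_univ, true_and] at hz ⊢
        rw [add_sub_cancel]
        exact hz
      · simp only [mem_filter, mem_product, mem_univ, true_and] at hz ⊢
        exact hz
      · obtain ⟨z1, z2⟩ := z
        simp only [Prod.mk.injEq]
        exact ⟨by ring, trivial⟩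
      · obtain ⟨z1, z2⟩ := z
        simp only [Prod.mk.injEq]
        exact ⟨by ring, trivial⟩
    have hT := Finset.card_eq_sum_card_fiberwise
      (s := (univ ×ˢ univ).filter fun z : F × F => D (z.2 + z.1) = D z.2)
      (t := univ) (f := fun z => z.1) (fun x _ => mem_univ _)
    rw [hST, hT]
    apply sum_congr rfl
    intro a _
    rw [filter_filter]
    refine Finset.card_bij' (fun z _ => z.2) (fun x _ => ((a, x) : F × F))
      (fun z hz => ?_) (fun x hx => ?_) (fun z hz => ?_) (fun x hx => ?_)
    · simp only [mem_filter, mem_product, mem_univ, true_and] at hz ⊢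
      obtain ⟨hDz, haz⟩ := hz
      rw [← haz]
      exact hDz
    · simp only [mem_filter, mem_product, mem_univ, true_and] at hx ⊢
      exact ⟨hx, trivial⟩
    · simp only [mem_filter, mem_product, mem_univ, true_and] at hz
      obtain ⟨z1, z2⟩ := z
      simp only [Prod.mk.injEq]
      exact ⟨hz.2.symm, trivial⟩
    · rfl
  rw [Finset.sum_congr rfl (fun b _ => h1 b), h2, h3]

lemma sum_M (p : ℕ) (hp : p.Prime) [CharP F p] (m : ℕ) (hq2 : 2 ≤ p ^ m)
    (hcard : Fintype.card F = (p ^ m) ^ 2) (hoddq : Odd (p ^ m))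
    (h2 : (2:F) ≠ 0) (h3 : (3:F) ≠ 0) (h3dvd : 3 ∣ p ^ m + 1)
    (hfrob : ∀ x y : F, (x + y) ^ (p^m) = x ^ (p^m) + y ^ (p^m))
    (hqq : ∀ x : F, (x ^ (p^m)) ^ (p^m) = x) :
    ∑ a ∈ univ, (univ.filter fun x : F =>
        (x+a+1)^(p^m+2) - (x+a)^(p^m+2) = (x+1)^(p^m+2) - x^(p^m+2)).card
      = 4*(p^m)*(p^m) - 4*(p^m) + 1 := by
  set q := p ^ m with hq
  have hq0 : q ≠ 0 := by omega
  have hM0 : (univ.filter fun x : F =>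
      (x+(0:F)+1)^(q+2) - (x+0)^(q+2) = (x+1)^(q+2) - x^(q+2)).card = q * q := by
    have e : (univ.filter fun x : F =>
        (x+(0:F)+1)^(q+2) - (x+0)^(q+2) = (x+1)^(q+2) - x^(q+2)) = univ := by
      apply filter_true_of_mem
      intro x _
      rw [add_zero]
    rw [e, card_univ, hcard]
    ring
  have hMa : ∀ a : F, (univ.filter fun x : F =>
        (x+a+1)^(q+2) - (x+a)^(q+2) = (x+1)^(q+2) - x^(q+2)).card
      = (univ.filter fun x : F =>
        2*a*x^q + 2*(a + a^q)*x + (2*a*a^q + a^q + a^2 + 2*a) = 0).card := by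
    intro a
    congr 1
    apply filter_congr
    intro x _
    rw [← sub_eq_zero, Dadd hfrob x a]
  rw [← Finset.add_sum_erase _ _ (mem_univ (0:F))]
  beta_reduce
  rw [hM0]
  rw [← Finset.sum_filter_add_sum_filter_not (univ.erase (0:F))
    (fun a => a^2 + a * a^q + (a^q)^2 = 0)]
  have hgood : ((univ.erase (0:F)).filter fun a => a^2 + a * a^q + (a^q)^2 = 0)
      = univ.filter fun a : F => a ≠ 0 ∧ a^2 + a * a^(q) + (a^(q))^2 = 0 := by
    ext a
    simp only [mem_filter, mem_erase, mem_univ, true_and, and_true]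
    try tauto
  have hgq : ∀ a ∈ (univ.erase (0:F)).filter
      (fun a => a^2 + a * a^q + (a^q)^2 = 0),
      (univ.filter fun x : F =>
        (x+a+1)^(q+2) - (x+a)^(q+2) = (x+1)^(q+2) - x^(q+2)).card = q := by
    intro a ha
    simp only [mem_filter, mem_erase, mem_univ, and_true, true_and] at ha
    rw [hMa a]
    exact Mq_count p hp m hq2 hcard hoddq h2 hfrob hqq a ha.1 ha.2
  have hb1 : ∀ a ∈ (univ.erase (0:F)).filter
      (fun a => ¬(a^2 + a * a^q + (a^q)^2 = 0)),
      (univ.filter fun x : F =>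
        (x+a+1)^(q+2) - (x+a)^(q+2) = (x+1)^(q+2) - x^(q+2)).card = 1 := by
    intro a ha
    simp only [mem_filter, mem_erase, mem_univ, and_true, true_and] at ha
    rw [hMa a]
    exact Mone hq0 h2 hfrob hqq a ha.2
  rw [Finset.sum_congr rfl hgq, Finset.sum_congr rfl hb1, sum_const, sum_const,
    smul_eq_mul, smul_eq_mul, mul_one, hgood, good_count p hp m hq2 hcard h3dvd h3]
  have hsplit := Finset.card_filter_add_card_filter_not
    (s := univ.erase (0:F)) (p := fun a => a^2 + a * a^q + (a^q)^2 = 0)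
  rw [hgood, good_count p hp m hq2 hcard h3dvd h3] at hsplit
  have hce : (univ.erase (0:F)).card = q*q - 1 := by
    rw [card_erase_of_mem (mem_univ 0), card_univ, hcard]
    have : q^2 = q*q := by ring
    omega
  rw [hce] at hsplit
  have hmul : (2 * (q-1)) * q = 2*(q*q) - 2*q := by
    rw [mul_assoc, Nat.sub_one_mul]
    have h2' : q ≤ q * q := Nat.le_mul_of_pos_left q (by omega)
    omega
  rw [hmul, show 4*q*q = 4*(q*q) from by ring]
  have h2' : q ≤ q * q := Nat.le_mul_of_pos_left q (by omega)
  omega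

end Main

set_option maxHeartbeats 1000000 in
/-- Let `p > 3` be prime, `n = 2m`, `p^m ≡ 2 (mod 3)`. Then `x^(p^m+2)` over `F_{p^n}` is
differentially 4-uniform and its differential spectrum is
`ω₀ = (3p^m + 1)(p^m - 1)/4`, `ω₁ = 1`, `ω₂ = p^m - 1`, `ω₃ = 0`,
`ω₄ = (p^m - 1)²/4`, `ωᵢ = 0` for `i > 4`. -/
theorem stmt17 (p : ℕ) (hp : p.Prime) (hp3 : 3 < p) (m : ℕ) (hm : 0 < m) (n : ℕ)
    (hn : n = 2 * m) (hmod : p ^ m % 3 = 2)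
    (F : Type*) [Field F] [Fintype F] [DecidableEq F]
    (hF : Fintype.card F = p ^ n) :
    (Finset.univ.sup (fun b : F => deltaF F (p ^ m + 2) b) = 4) ∧
    omegaF F (p ^ m + 2) 0 = (3 * p ^ m + 1) * (p ^ m - 1) / 4 ∧
    omegaF F (p ^ m + 2) 1 = 1 ∧
    omegaF F (p ^ m + 2) 2 = p ^ m - 1 ∧
    omegaF F (p ^ m + 2) 3 = 0 ∧
    omegaF F (p ^ m + 2) 4 = (p ^ m - 1) ^ 2 / 4 ∧
    (∀ i, 4 < i → omegaF F (p ^ m + 2) i = 0) := by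
  haveI hpF : Fact p.Prime := ⟨hp⟩
  -- characteristic of F is p
  obtain ⟨r, hr⟩ := CharP.exists F
  haveI := hr
  have hrprime : r.Prime := CharP.char_is_prime F r
  obtain ⟨k, -, hcardF⟩ := FiniteField.card F r
  have hpr : p = r := by
    have hdvd : p ∣ r ^ (k:ℕ) := by
      rw [← hcardF, hF]
      exact dvd_pow_self p (by omega)
    exact (Nat.prime_dvd_prime_iff_eq hp hrprime).mp (hp.dvd_of_dvd_pow hdvd)
  haveI hchar : CharP F p := hpr ▸ hr
  -- basic numeric facts
  have hp5 : 5 ≤ p := by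
    have h4 : p ≠ 4 := by intro h; rw [h] at hp; norm_num at hp
    omega
  set q := p ^ m with hq
  have hqp : p ≤ q := Nat.le_self_pow (by omega) p
  have hq5 : 5 ≤ q := le_trans hp5 hqp
  have hq0 : q ≠ 0 := by omega
  have hq2 : 2 ≤ q := by omega
  have hcard2 : Fintype.card F = q ^ 2 := by
    rw [hF, hn, hq, mul_comm 2 m, pow_mul]
  have hodd : Odd q := (hp.odd_of_ne_two (by omega)).pow
  have h3dvd : 3 ∣ q + 1 := by omega
  have h2 : (2:F) ≠ 0 := by
    have hnd : ¬ (p ∣ 2) := by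
      intro hdvd
      have := Nat.le_of_dvd (by norm_num) hdvd
      omega
    have h2' : ((2:ℕ):F) ≠ 0 := by
      rw [Ne, CharP.cast_eq_zero_iff F p 2]
      exact hnd
    simpa using h2'
  have h3 : (3:F) ≠ 0 := by
    have hnd : ¬ (p ∣ 3) := by
      intro hdvd
      have := Nat.le_of_dvd (by norm_num) hdvd
      omega
    have h3' : ((3:ℕ):F) ≠ 0 := by
      rw [Ne, CharP.cast_eq_zero_iff F p 3]
      exact hnd
    simpa using h3'
  have hfrob : ∀ x y : F, (x + y) ^ q = x ^ q + y ^ q := fun x y => add_pow_char_pow x y p m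
  have hqq : ∀ x : F, (x ^ q) ^ q = x := by
    intro x
    rw [← pow_mul, show q * q = Fintype.card F from by rw [hcard2]; ring]
    exact FiniteField.pow_card x
  -- rewrite deltaF via the E function
  have hdelta : ∀ b : F, deltaF F (q + 2) b
      = (univ.filter fun x : F => x^q*(2*x+1) + (x+1)^2 = b).card := by
    intro b
    unfold deltaF
    congr 1
    apply filter_congr
    intro x _
    rw [Dform hfrob x]
  -- the key pointwise facts
  have hquarter : deltaF F (q+2) ((4:F)⁻¹) = 1 := by
    rw [hdelta, E_quarter hq0 h2 h3 hfrob hqq, Finset.card_singleton]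
  have hle : ∀ b : F, deltaF F (q+2) b ≤ 4 := by
    intro b
    by_cases hb : b = (4:F)⁻¹
    · rw [hb, hquarter]; norm_num
    · rw [hdelta]; exact E_card_le hq0 h2 h3 hfrob hqq b hb
  have heven : ∀ b : F, b ≠ (4:F)⁻¹ → Even (deltaF F (q+2) b) := by
    intro b hb
    rw [hdelta]
    exact E_even hq0 h2 hfrob b hb
  have hvals : ∀ b : F, deltaF F (q+2) b = 0 ∨ deltaF F (q+2) b = 1
      ∨ deltaF F (q+2) b = 2 ∨ deltaF F (q+2) b = 4 := by
    intro b
    by_cases hb : b = (4:F)⁻¹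
    · right; left; rw [hb]; exact hquarter
    · obtain ⟨t, ht⟩ := heven b hb
      have := hle b
      omega
  -- the two moments
  have hsum1 : ∑ b ∈ univ, deltaF F (q+2) b = q^2 := by
    have h := sum_fiber_card (fun x : F => (x+1)^(q+2) - x^(q+2))
    rw [hcard2] at h
    exact h
  have hsum2 : ∑ b ∈ univ, (deltaF F (q+2) b)^2 = 4*q*q - 4*q + 1 := by
    have h := sum_sq_pairs (fun x : F => (x+1)^(q+2) - x^(q+2))
    have h' := sum_M p hp m hq2 hcard2 hodd h2 h3 h3dvd hfrob hqq
    calc ∑ b ∈ univ, (deltaF F (q+2) b)^2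
        = ∑ b ∈ univ, ((univ.filter fun x : F => (x+1)^(q+2) - x^(q+2) = b).card)^2 := rfl
      _ = ∑ a ∈ univ, (univ.filter fun x : F =>
            (x+a+1)^(q+2) - (x+a)^(q+2) = (x+1)^(q+2) - x^(q+2)).card := h
      _ = 4*q*q - 4*q + 1 := h'
  -- omega values
  have homega : ∀ i : ℕ, omegaF F (q+2) i
      = (univ.filter fun b : F => deltaF F (q+2) b = i).card := fun i => rfl
  have hW1 : omegaF F (q+2) 1 = 1 := by
    rw [homega]
    have e : (univ.filter fun b : F => deltaF F (q+2) b = 1) = {(4:F)⁻¹} := by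
      ext b
      simp only [mem_filter, mem_univ, true_and, mem_singleton]
      constructor
      · intro h1
        by_contra hb
        obtain ⟨t, ht⟩ := heven b hb
        omega
      · rintro rfl
        exact hquarter
    rw [e, Finset.card_singleton]
  have hW3 : omegaF F (q+2) 3 = 0 := by
    rw [homega, Finset.card_eq_zero, Finset.filter_eq_empty_iff]
    intro b _
    have := hvals b
    omega
  have hWgt : ∀ i, 4 < i → omegaF F (q+2) i = 0 := by
    intro i hi
    rw [homega, Finset.card_eq_zero, Finset.filter_eq_empty_iff]
    intro b _
    have := hle b
    omega
  -- fiberwise decomposition over range 5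
  have hmaps : ∀ b : F, b ∈ univ → deltaF F (q+2) b ∈ range 5 := by
    intro b _
    rw [mem_range]
    have := hle b
    omega
  have hcardsplit : q^2 = ∑ i ∈ range 5, omegaF F (q+2) i := by
    have h := Finset.card_eq_sum_card_fiberwise hmaps
    rw [card_univ, hcard2] at h
    exact h
  have hsumsplit : ∑ b ∈ univ, deltaF F (q+2) b
      = ∑ i ∈ range 5, i * omegaF F (q+2) i := by
    rw [← Finset.sum_fiberwise_of_maps_to hmaps (fun b => deltaF F (q+2) b)]
    apply sum_congr rfl
    intro i _
    rw [homega]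
    rw [Finset.sum_congr rfl (fun b hb => (mem_filter.mp hb).2), sum_const, smul_eq_mul,
      mul_comm]
  have hsqsplit : ∑ b ∈ univ, (deltaF F (q+2) b)^2
      = ∑ i ∈ range 5, i^2 * omegaF F (q+2) i := by
    rw [← Finset.sum_fiberwise_of_maps_to hmaps (fun b => (deltaF F (q+2) b)^2)]
    apply sum_congr rfl
    intro i _
    rw [homega]
    rw [Finset.sum_congr rfl (fun b hb => by rw [(mem_filter.mp hb).2]), sum_const,
      smul_eq_mul, mul_comm]
  rw [hsumsplit] at hsum1
  rw [hsqsplit] at hsum2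
  simp only [Finset.sum_range_succ, Finset.sum_range_zero] at hcardsplit hsum1 hsum2
  -- arithmetic endgame
  obtain ⟨j, hj⟩ : ∃ j, q = 2*j + 1 := by
    obtain ⟨t, ht⟩ := hodd
    exact ⟨t, by omega⟩
  obtain ⟨X, hX⟩ : ∃ X, X = j * j := ⟨_, rfl⟩
  have hq2eq : q^2 = 4*X + 4*j + 1 := by rw [hX, hj]; ring
  have hs2eq : 4*q*q - 4*q + 1 = 16*X + 8*j + 1 := by
    have e1 : 4*q*q = 16*X + 16*j + 4 := by rw [hX, hj]; ring
    omega
  have hG0 : (3*q + 1) * (q - 1) = 12*X + 8*j := by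
    have e1 : q - 1 = 2*j := by omega
    rw [e1, hj, hX]
    ring
  have hG4 : (q - 1)^2 = 4*X := by
    have e1 : q - 1 = 2*j := by omega
    rw [e1, hX]
    ring
  have hXj : 4 ≤ X := by
    have hj2 : 2 ≤ j := by omega
    rw [hX]
    calc 4 = 2 * 2 := rfl
    _ ≤ j * j := Nat.mul_le_mul hj2 hj2
  rw [hq2eq] at hsum1 hcardsplit
  rw [hs2eq] at hsum2
  have hW2v : omegaF F (q+2) 2 = q - 1 := by omega
  have hW4v : omegaF F (q+2) 4 = X := by omega
  have hW0v : omegaF F (q+2) 0 = 3*X + 2*j := by omega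
  refine ⟨?_, ?_, hW1, ?_, hW3, ?_, hWgt⟩
  · -- sup = 4
    apply le_antisymm
    · exact Finset.sup_le fun b _ => hle b
    · have hpos : 0 < omegaF F (q+2) 4 := by omega
      rw [homega] at hpos
      obtain ⟨b, hb⟩ := Finset.card_pos.mp hpos
      simp only [mem_filter, mem_univ, true_and] at hb
      have hles := Finset.le_sup (f := fun b : F => deltaF F (q+2) b) (mem_univ b)
      omega
  · rw [hW0v, hG0]
    omega
  · rw [hW2v]
  · rw [hW4v, hG4]
    omega
end

section
/- Let p be an odd prime, m a positive integer, and n = 2m - 1. For the power mapping F(x) = x^{p^m+2} over F_{p^n}: (i) δ(b) ≤ p + 3 for every b ∈ F_{p^n}; (ii) for every odd integer i with 0 < i < p + 3, i ≠ 1 and i ≠ p, there is no b ∈ F_{p^n} with δ(b) = i (i.e., ω_i = 0). -/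
open Finset Polynomial

lemma even_card_of_invol_s18 {α : Type*} [DecidableEq α] :
    ∀ (s : Finset α) (σ : α → α), (∀ x ∈ s, σ x ∈ s) → (∀ x ∈ s, σ (σ x) = x) →
    (∀ x ∈ s, σ x ≠ x) → Even s.card := by
  intro s
  induction s using Finset.strongInduction with
  | _ s ih =>
    intro σ hmem hinv hfix
    rcases s.eq_empty_or_nonempty with rfl | ⟨a, ha⟩
    · simp
    · have hsa := hmem a ha
      have hne : σ a ≠ a := hfix a ha
      set t := s \ {a, σ a} with ht
      have hsub : ({a, σ a} : Finset α) ⊆ s := by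
        intro z hz
        simp only [Finset.mem_insert, Finset.mem_singleton] at hz
        rcases hz with rfl | rfl <;> assumption
      have hat : a ∉ t := by simp [ht]
      have hts : t ⊂ s := (Finset.ssubset_iff_of_subset Finset.sdiff_subset).mpr ⟨a, ha, hat⟩
      have h1 : ∀ x ∈ t, σ x ∈ t := by
        intro x hx
        simp only [ht, Finset.mem_sdiff, Finset.mem_insert, Finset.mem_singleton] at hx ⊢
        refine ⟨hmem x hx.1, ?_⟩
        rintro (h | h)
        · exact hx.2 (Or.inr (by rw [← h, hinv x hx.1]))
        · apply hx.2
          left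
          have := congrArg σ h
          rwa [hinv x hx.1, hinv a ha] at this
      have h2 : ∀ x ∈ t, σ (σ x) = x := fun x hx => hinv x (Finset.sdiff_subset hx)
      have h3 : ∀ x ∈ t, σ x ≠ x := fun x hx => hfix x (Finset.sdiff_subset hx)
      have heven := ih t hts σ h1 h2 h3
      have hc2 : ({a, σ a} : Finset α).card = 2 := Finset.card_pair (Ne.symm hne)
      have hcs : t.card = s.card - 2 := by rw [ht, Finset.card_sdiff_of_subset hsub, hc2]
      have hle : 2 ≤ s.card := hc2 ▸ Finset.card_le_card hsub
      obtain ⟨k, hk⟩ := heven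
      exact ⟨k + 1, by omega⟩

lemma card_filter_root_le {F : Type*} [Field F] [Fintype F] [DecidableEq F]
    (P : F[X]) (hP : P ≠ 0) :
    (Finset.univ.filter fun x => P.eval x = 0).card ≤ P.natDegree := by
  calc (Finset.univ.filter fun x => P.eval x = 0).card
      ≤ P.roots.toFinset.card := by
        apply Finset.card_le_card
        intro x hx
        simp only [Finset.mem_filter] at hx
        simp [Multiset.mem_toFinset, Polynomial.mem_roots, hP, Polynomial.IsRoot, hx.2]
    _ ≤ Multiset.card P.roots := Multiset.toFinset_card_le _
    _ ≤ P.natDegree := P.card_roots'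

/-- Let `p` be an odd prime and `n = 2m - 1`. For `x^(p^m+2)` over `F_{p^n}`:
(i) `δ(b) ≤ p + 3` for every `b`; (ii) `ωᵢ = 0` for every odd `i` with `0 < i < p + 3`,
`i ≠ 1` and `i ≠ p`. -/
theorem stmt18 (p : ℕ) (hp : p.Prime) (hpodd : Odd p) (m : ℕ) (hm : 0 < m) (n : ℕ)
    (hn : n = 2 * m - 1)
    (F : Type*) [Field F] [Fintype F] [DecidableEq F]
    (hF : Fintype.card F = p ^ n) :
    (∀ b : F, deltaF F (p ^ m + 2) b ≤ p + 3) ∧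
    (∀ i, Odd i → 0 < i → i < p + 3 → i ≠ 1 → i ≠ p → omegaF F (p ^ m + 2) i = 0) := by
  haveI pFact : Fact p.Prime := ⟨hp⟩
  obtain ⟨r, hr⟩ := CharP.exists F
  haveI := hr
  obtain ⟨k, hrp, hcard⟩ := FiniteField.card F r
  have hrdvd : r ∣ p := by
    have h1 : r ∣ p ^ n := by
      have h2 : r ∣ r ^ (k : ℕ) := dvd_pow_self r (by positivity)
      rwa [← hcard, hF] at h2
    exact hrp.dvd_of_dvd_pow h1
  have hrpeq : r = p := (Nat.prime_dvd_prime_iff_eq hrp hp).mp hrdvd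
  subst hrpeq
  haveI hchar : CharP F r := hr
  haveI : ExpChar F r := ExpChar.prime hrp
  have hp3 : 3 ≤ r := by
    have h2 := hrp.two_le
    have hne2 : r ≠ 2 := by rintro rfl; simp [Nat.odd_iff] at hpodd
    omega
  have h2F : (2 : F) ≠ 0 := by
    intro h
    have h1 : ((2 : ℕ) : F) = 0 := by exact_mod_cast h
    have h2 := (CharP.cast_eq_zero_iff F r 2).mp h1
    have := Nat.le_of_dvd (by norm_num) h2
    omega
  have h4F : (4 : F) ≠ 0 := by
    have h24 : (2 : F) * 2 = 4 := by norm_num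
    rw [← h24]; exact mul_ne_zero h2F h2F
  have h2p : (2 : F) ^ r = 2 := by
    have h := add_pow_char (1 : F) 1 r
    simpa [one_add_one_eq_two] using h
  have hfixpow : ∀ v : F, v ^ r = v → ∀ k : ℕ, v ^ r ^ k = v := by
    intro v hv k
    induction k with
    | zero => simp
    | succ k ihk => rw [pow_succ, pow_mul, ihk, hv]
  have h2q : (2 : F) ^ r ^ m = 2 := hfixpow 2 h2p m
  have hq : ∀ x : F, x ^ r ^ n = x := by
    intro x; rw [← hF]; exact FiniteField.pow_card x
  have hq2 : ∀ x : F, (x ^ r ^ m) ^ r ^ m = x ^ r := by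
    intro x
    rw [← pow_mul, ← pow_add]
    have h2m : m + m = n + 1 := by omega
    rw [h2m, pow_succ, pow_mul, hq x]
  have hqodd : Odd (r ^ m) := hpodd.pow
  have hdodd : Odd (r ^ m + 2) := by
    rcases hqodd with ⟨t, ht⟩; exact ⟨t + 1, by omega⟩
  have hfrob : ∀ x : F, (x + 1) ^ r ^ m = x ^ r ^ m + 1 := by
    intro x; rw [add_pow_char_pow, one_pow]
  have heq : ∀ x : F, (x + 1) ^ (r ^ m + 2) - x ^ (r ^ m + 2)
      = 2 * x * x ^ r ^ m + x ^ r ^ m + x ^ 2 + 2 * x + 1 := by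
    intro x
    rw [pow_add, pow_add, hfrob]
    ring
  -- part (i)
  have parti : ∀ b : F, deltaF F (r ^ m + 2) b ≤ r + 3 := by
    intro b
    set Q : F[X] := C (-4) * X ^ (r + 3) + C (-6) * X ^ (r + 2) + C (4 * b - 4) * X ^ (r + 1)
      + C (2 * b - 1) * X ^ r + C 1 * X ^ 4 + C (-(4 * b ^ r ^ m + 2 * b)) * X ^ 2
      + C (-(4 * b ^ r ^ m)) * X + C (b ^ 2 - b ^ r ^ m) with hQ
    have hne1 : ¬(r + 3 = r + 2) := by omega
    have hne2 : ¬(r + 3 = r + 1) := by omega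
    have hne3 : ¬(r + 3 = r) := by omega
    have hne4 : ¬(r + 3 = 4) := by omega
    have hne5 : ¬(r + 3 = 2) := by omega
    have hne6 : ¬(r + 3 = 1) := by omega
    have hne7 : ¬(r + 3 = 0) := by omega
    have hcoeff : Q.coeff (r + 3) = -4 := by
      simp only [hQ, coeff_add, coeff_C_mul, coeff_X_pow, coeff_C, Polynomial.coeff_X,
        hne1, hne2, hne3, hne4, hne5, hne6, hne7, if_true, if_false, ite_true, ite_false,
        eq_self_iff_true]
      norm_num
    have hQne : Q ≠ 0 := by
      intro h0
      rw [h0, coeff_zero] at hcoeff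
      exact (neg_ne_zero.mpr h4F) hcoeff.symm
    have hdeg : Q.natDegree ≤ r + 3 := by
      rw [hQ]
      compute_degree
      all_goals omega
    have hroot : ∀ x : F, (x + 1) ^ (r ^ m + 2) - x ^ (r ^ m + 2) = b → Q.eval x = 0 := by
      intro x hx
      have h1 : 2 * x * x ^ r ^ m + x ^ r ^ m + x ^ 2 + 2 * x + 1 = b := by
        rw [← heq x]; exact hx
      have e := congrArg (iterateFrobenius F r m) h1
      simp only [map_add, map_mul, map_pow, map_one, map_ofNat, iterateFrobenius_def] at e
      rw [hq2 x] at e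
      rw [hQ]
      simp only [eval_add, eval_mul, eval_pow, eval_C, eval_X]
      have p1 : x ^ (r + 3) = x ^ r * x ^ 3 := by rw [pow_add]
      have p2 : x ^ (r + 2) = x ^ r * x ^ 2 := by rw [pow_add]
      have p3 : x ^ (r + 1) = x ^ r * x := by rw [pow_add, pow_one]
      rw [p1, p2, p3]
      linear_combination (2 * x + 1) ^ 2 * e +
        (-(2 * (x ^ r) * (2 * x + 1)) - 2 * (x ^ r ^ m + 1) * (2 * x + 1)
          + (2 * x * x ^ r ^ m + x ^ r ^ m + x ^ 2 + 2 * x + 1 - b)) * h1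
    calc deltaF F (r ^ m + 2) b
        ≤ (Finset.univ.filter fun x : F => Q.eval x = 0).card := by
          apply Finset.card_le_card
          intro x hx
          simp only [deltaF, Finset.mem_filter, Finset.mem_univ, true_and] at hx ⊢
          exact hroot x hx
      _ ≤ Q.natDegree := card_filter_root_le Q hQne
      _ ≤ r + 3 := hdeg
  refine ⟨parti, ?_⟩
  -- part (ii)
  intro i hoddi _ _ hi1 hir
  rw [omegaF, Finset.card_eq_zero, Finset.filter_eq_empty_iff]
  intro b _
  intro hdb
  -- Step 1 : b must be 4⁻¹
  have hb : b = (4 : F)⁻¹ := by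
    by_contra hbne
    have heven : Even (deltaF F (r ^ m + 2) b) := by
      rw [deltaF]
      apply even_card_of_invol_s18 _ (fun x => -1 - x)
      · intro x hx
        simp only [Finset.mem_filter, Finset.mem_univ, true_and] at hx ⊢
        have e1 : (-1 - x + 1 : F) = -x := by ring
        have e2 : (-1 - x : F) = -(x + 1) := by ring
        rw [e1, e2, hdodd.neg_pow, hdodd.neg_pow, ← hx]
        ring
      · intro x _; ring
      · intro x hx hfx
        simp only [Finset.mem_filter, Finset.mem_univ, true_and] at hx
        have hxval : x = -(2⁻¹ : F) := by
          have hx2 : (2 : F) * x = -1 := by linear_combination -hfx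
          apply mul_left_cancel₀ h2F
          rw [hx2]
          field_simp
        apply hbne
        rw [← hx, heq x, hxval]
        have hB : (-(2⁻¹ : F)) ^ r ^ m = -(2⁻¹ : F) := by
          rw [hqodd.neg_pow, inv_pow, h2q]
        rw [hB]
        field_simp
        ring
    rw [hdb] at heven
    exact (Nat.not_even_iff_odd.mpr hoddi) heven
  subst hb
  -- key identity
  have key : ∀ x : F, 4 * ((2 * x + 1) ^ r ^ m) * (2 * x + 1) + 2 * (2 * x + 1) ^ 2
      = 8 * ((x + 1) ^ (r ^ m + 2) - x ^ (r ^ m + 2)) - 2 := by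
    intro x
    have hu : (2 * x + 1) ^ r ^ m = 2 * x ^ r ^ m + 1 := by
      rw [add_pow_char_pow, mul_pow, h2q, one_pow]
    rw [hu, heq x]
    ring
  have h84 : (8 : F) * 4⁻¹ = 2 := by
    field_simp
    norm_num
  have h8F : (8 : F) ≠ 0 := by
    have h28 : (2 : F) * 4 = 8 := by norm_num
    rw [← h28]; exact mul_ne_zero h2F h4F
  -- Step 2 : reduce to counting u with 4 u^q u + 2 u² = 0
  have hT : deltaF F (r ^ m + 2) (4 : F)⁻¹
      = (Finset.univ.filter fun u : F => 4 * (u ^ r ^ m) * u + 2 * u ^ 2 = 0).card := by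
    rw [deltaF]
    apply Finset.card_nbij' (fun x : F => 2 * x + 1) (fun u : F => (u - 1) * 2⁻¹)
    · intro x hx
      simp only [Finset.mem_coe, Finset.mem_filter, Finset.mem_univ, true_and] at hx ⊢
      rw [key x, hx]
      linear_combination h84
    · intro u hu
      simp only [Finset.mem_coe, Finset.mem_filter, Finset.mem_univ, true_and] at hu ⊢
      have hju : 2 * ((u - 1) * 2⁻¹) + 1 = u := by field_simp; ring
      have hk := key ((u - 1) * 2⁻¹)
      rw [hju, hu] at hk
      -- hk : 0 = 8 * L - 2
      apply mul_left_cancel₀ h8F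
      rw [h84]
      linear_combination -hk
    · intro x _
      field_simp
      ring
    · intro u _
      field_simp
      ring
  -- Step 3 : identify the nonzero solutions
  set T : Finset F := Finset.univ.filter fun u : F => 4 * (u ^ r ^ m) * u + 2 * u ^ 2 = 0 with hTdef
  have h0T : (0 : F) ∈ T := by simp [hTdef, zero_pow (by positivity : r ^ m ≠ 0)]
  have hi2 : (4 : F) * 2⁻¹ = 2 := by field_simp; norm_num
  have hmemT' : ∀ u : F, u ∈ T.erase 0 ↔ u ≠ 0 ∧ u ^ r ^ m = -(2⁻¹ : F) * u := by
    intro u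
    simp only [Finset.mem_erase, hTdef, Finset.mem_filter, Finset.mem_univ, true_and]
    constructor
    · rintro ⟨hu0, hcond⟩
      refine ⟨hu0, ?_⟩
      have h4u : (4 : F) * u ≠ 0 := mul_ne_zero h4F hu0
      apply mul_left_cancel₀ h4u
      linear_combination hcond + u ^ 2 * hi2
    · rintro ⟨hu0, hcond⟩
      exact ⟨hu0, by linear_combination (4 * u) * hcond - u ^ 2 * hi2⟩
  have hcardT : T.card = (T.erase 0).card + 1 := by
    rw [Finset.card_erase_of_mem h0T]
    have := Finset.card_pos.mpr ⟨0, h0T⟩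
    omega
  -- Step 4/5 : the nonzero solution set is empty or has p - 1 elements
  rcases (T.erase 0).eq_empty_or_nonempty with hTe | ⟨u₀, hu₀⟩
  · apply hi1
    rw [← hdb, hT, hcardT, hTe]
    simp
  · -- the fiber bijects with the nonzero elements of the prime field
    obtain ⟨hu₀0, hu₀c⟩ := (hmemT' u₀).mp hu₀
    have hc0 : (-(2⁻¹ : F)) ≠ 0 := by
      simp only [ne_eq, neg_eq_zero, inv_eq_zero]
      exact h2F
    set K : Finset F := Finset.univ.filter fun v : F => v ^ r = v with hKdef
    have h0K : (0 : F) ∈ K := by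
      simp [hKdef, zero_pow (by omega : r ≠ 0)]
    -- K has exactly r elements
    have hKcard : K.card = r := by
      have f : ZMod r →+* F := ZMod.castHom dvd_rfl F
      have hfinj : Function.Injective f := f.injective
      have himg : Finset.univ.image f ⊆ K := by
        intro v hv
        simp only [Finset.mem_image] at hv
        obtain ⟨a, _, rfl⟩ := hv
        simp only [hKdef, Finset.mem_filter, Finset.mem_univ, true_and]
        rw [← map_pow, ZMod.pow_card]
      have himgcard : (Finset.univ.image f).card = r := by
        rw [Finset.card_image_of_injective _ hfinj, Finset.card_univ, ZMod.card]
      have hle : K.card ≤ r := by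
        set R : F[X] := X ^ r - X with hRdef
        have hRne : R ≠ 0 := by
          intro h0
          have hc : R.coeff r = 1 := by
            simp only [hRdef, coeff_sub, coeff_X_pow, Polynomial.coeff_X,
              if_pos rfl]
            have hr1 : ¬(1 = r) := by omega
            simp [hr1]
          rw [h0, coeff_zero] at hc
          exact one_ne_zero hc.symm
        have hRdeg : R.natDegree ≤ r := by
          rw [hRdef]
          compute_degree
          all_goals omega
        calc K.card ≤ (Finset.univ.filter fun x : F => R.eval x = 0).card := by
              apply Finset.card_le_card
              intro v hv
              simp only [hKdef, Finset.mem_filter, Finset.mem_univ, true_and] at hv ⊢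
              simp [hRdef, sub_eq_zero, hv]
          _ ≤ R.natDegree := card_filter_root_le R hRne
          _ ≤ r := hRdeg
      have hge : r ≤ K.card := himgcard ▸ Finset.card_le_card himg
      omega
    -- bijection between T.erase 0 and K.erase 0
    have hbij : (T.erase 0).card = (K.erase 0).card := by
      apply Finset.card_nbij' (fun u : F => u * u₀⁻¹) (fun v : F => v * u₀)
      · intro u hu
        obtain ⟨hu0, huc⟩ := (hmemT' u).mp hu
        have hv0 : u * u₀⁻¹ ≠ 0 := mul_ne_zero hu0 (inv_ne_zero hu₀0)
        have hvq : (u * u₀⁻¹) ^ r ^ m = u * u₀⁻¹ := by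
          rw [mul_pow, inv_pow, huc, hu₀c]
          field_simp
        simp only [Finset.mem_coe, Finset.mem_erase, hKdef, Finset.mem_filter, Finset.mem_univ, true_and]
        refine ⟨hv0, ?_⟩
        have := hq2 (u * u₀⁻¹)
        rw [hvq, hvq] at this
        exact this.symm
      · intro v hv
        simp only [Finset.mem_coe, Finset.mem_erase, hKdef, Finset.mem_filter, Finset.mem_univ,
          true_and] at hv
        obtain ⟨hv0, hvr⟩ := hv
        have hvq : v ^ r ^ m = v := hfixpow v hvr m
        apply (hmemT' (v * u₀)).mpr
        refine ⟨mul_ne_zero hv0 hu₀0, ?_⟩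
        rw [mul_pow, hvq, hu₀c]
        ring
      · intro u hu
        have hu0 := ((hmemT' u).mp hu).1
        field_simp
      · intro v hv
        field_simp
    -- the count of nonzero prime-field elements is r - 1
    have hKe : (K.erase 0).card = r - 1 := by
      rw [Finset.card_erase_of_mem h0K, hKcard]
    apply hir
    rw [← hdb, hT, hcardT, hbij, hKe]
    omega
end
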